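/- arXiv:2208.01958 — 5 statements merged into one kernel-verified Lean document; each statement's English description precedes it below -/
import Mathlib

section
/- Suppose X is compact, the moment class P_{f,r'} is nonempty for all r' in an open neighborhood of r, and for any r' in this neighborhood there exists a coupling γ with first marginal μ1 and second marginal in P_{f,r'}. Define d(μ1, P_{f,r}) := inf { ∫_{X×X} c dγ : γ a Borel probability measure on X × X with γ_1 = μ1 and γ_2 ∈ P_{f,r} }. Then there is no duality gap and the dual supremum is attained: there exists λ* ∈ ℝ^M such that d(μ1, P_{f,r}) = ∫_X ( min_{y ∈ X} { c(x,y) − (λ*)ᵀf̃(y) } ) μ1(dx). -/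
open MeasureTheory Real

/-- The moment class `P_{f,r}`: Borel probability measures `μ` on `X` with
`∫ f_i dμ = r_i` for all `i`. -/
def momentClass {M : ℕ} {X : Type*} [MeasurableSpace X]
    (f : X → Fin M → ℝ) (r : Fin M → ℝ) : Set (Measure X) :=
  {μ | IsProbabilityMeasure μ ∧ ∀ i, ∫ y, f y i ∂μ = r i}

section Helpers

lemma integrable_cont {X : Type*} [TopologicalSpace X] [CompactSpace X] [T2Space X]
    [MeasurableSpace X] [OpensMeasurableSpace X] (μ : Measure X) [IsFiniteMeasure μ]
    {g : X → ℝ} (hg : Continuous g) : Integrable g μ :=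
  hg.integrable_of_hasCompactSupport (isClosed_tsupport g).isCompact

lemma integrable_cont_comp {X Y : Type*} [MeasurableSpace X] (μ : Measure X) [IsFiniteMeasure μ]
    [TopologicalSpace Y] [CompactSpace Y] [Nonempty Y] [MeasurableSpace Y] [OpensMeasurableSpace Y]
    {G : Y → ℝ} (hG : Continuous G) {Φ : X → Y} (hΦ : Measurable Φ) :
    Integrable (fun x => G (Φ x)) μ := by
  obtain ⟨y0, -, hy0⟩ := isCompact_univ.exists_isMaxOn Set.univ_nonempty
    (continuous_abs.comp hG).continuousOn
  exact ⟨(hG.measurable.comp hΦ).aestronglyMeasurable,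
    HasFiniteIntegral.of_bounded (C := |G y0|) (ae_of_all _ fun x => by
      simpa using hy0 (Set.mem_univ (Φ x)))⟩

section InfCont
variable {X : Type*} [MetricSpace X] [CompactSpace X] [Nonempty X]
variable {H : X × X → ℝ} (hh : Continuous H)
include hh

lemma inf_exists_min (x : X) : ∃ y, ∀ y', H (x, y) ≤ H (x, y') := by
  obtain ⟨y, -, hy⟩ := isCompact_univ.exists_isMinOn Set.univ_nonempty
    ((hh.comp (Continuous.prodMk_right x)).continuousOn)
  exact ⟨y, fun y' => hy (Set.mem_univ y')⟩

lemma inf_bddBelow (x : X) : BddBelow (Set.range fun y => H (x, y)) := by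
  obtain ⟨y, hy⟩ := inf_exists_min hh x
  exact ⟨H (x, y), by rintro - ⟨y', rfl⟩; exact hy y'⟩

lemma inf_le (x y : X) : (⨅ y', H (x, y')) ≤ H (x, y) := ciInf_le (inf_bddBelow hh x) y

lemma inf_attained (x : X) : ∃ y, (⨅ y', H (x, y')) = H (x, y) := by
  obtain ⟨y, hy⟩ := inf_exists_min hh x
  exact ⟨y, le_antisymm (inf_le hh x y) (le_ciInf hy)⟩

lemma inf_continuous : Continuous fun x => ⨅ y, H (x, y) := by
  refine Metric.uniformContinuous_iff.mpr (fun ε hε => ?_) |>.continuous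
  obtain ⟨δ, hδ, hd⟩ := Metric.uniformContinuous_iff.mp
    (CompactSpace.uniformContinuous_of_continuous hh) ε hε
  refine ⟨δ, hδ, fun {x x'} hxx' => ?_⟩
  have key : ∀ a b : X, dist a b < δ → (⨅ y, H (a, y)) < (⨅ y, H (b, y)) + ε := by
    intro a b hab
    obtain ⟨yb, hyb⟩ := inf_attained hh b
    have hdist : dist ((a, yb) : X × X) (b, yb) < δ := by
      simpa [Prod.dist_eq, dist_nonneg] using hab
    have := hd hdist
    rw [Real.dist_eq, abs_sub_lt_iff] at this
    calc (⨅ y, H (a, y)) ≤ H (a, yb) := inf_le hh a yb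
      _ < H (b, yb) + ε := by linarith [this.1]
      _ = (⨅ y, H (b, y)) + ε := by rw [hyb]
  rw [Real.dist_eq, abs_sub_lt_iff]
  exact ⟨by linarith [key x x' hxx'], by linarith [key x' x (dist_comm x x' ▸ hxx')]⟩

end InfCont

lemma exists_subgradient {M : ℕ} {E : Set ((Fin M → ℝ) × ℝ)} (hE : Convex ℝ E)
    {r : Fin M → ℝ} {v C : ℝ} {U : Set (Fin M → ℝ)} (hU : U ∈ nhds r)
    (hbox : ∀ r' ∈ U, ∀ t : ℝ, C < t → (r', t) ∈ E)
    (hlow : ∀ t : ℝ, (r, t) ∈ E → v ≤ t) :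
    ∃ lam : Fin M → ℝ, ∀ p ∈ E, v ≤ p.2 + ∑ i, lam i * (p.1 i - r i) := by
  classical
  have hrU : r ∈ interior U := mem_interior_iff_mem_nhds.mpr hU
  have hW : (interior U) ×ˢ Set.Ioi C ⊆ interior E :=
    interior_maximal (fun p ⟨hp1, hp2⟩ => hbox p.1 (interior_subset hp1) p.2 hp2)
      (isOpen_interior.prod isOpen_Ioi)
  have hx0 : ((r, v) : (Fin M → ℝ) × ℝ) ∉ interior E := by
    intro hmem
    have hcont : Continuous fun t : ℝ => ((r, t) : (Fin M → ℝ) × ℝ) :=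
      continuous_const.prodMk continuous_id
    have : {t : ℝ | ((r, t) : (Fin M → ℝ) × ℝ) ∈ interior E} ∈ nhds v :=
      hcont.continuousAt.preimage_mem_nhds (isOpen_interior.mem_nhds hmem)
    obtain ⟨ε, hε, hball⟩ := Metric.mem_nhds_iff.mp this
    have h1 : (r, v - ε / 2) ∈ interior E := hball (by
      rw [Metric.mem_ball, Real.dist_eq, abs_of_nonpos (by linarith)]
      linarith)
    have := hlow _ (interior_subset h1)
    linarith
  obtain ⟨φ, hφ⟩ := geometric_hahn_banach_open_point (hE.interior) isOpen_interior hx0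
  set β : ℝ := φ (0, 1) with hβdef
  set ψ : (Fin M → ℝ) → ℝ := fun w => φ (w, 0) with hψdef
  have hsplit : ∀ w : Fin M → ℝ, ∀ t : ℝ, φ (w, t) = ψ w + t * β := by
    intro w t
    have : ((w, t) : (Fin M → ℝ) × ℝ) = (w, 0) + t • ((0 : Fin M → ℝ), (1 : ℝ)) := by
      simp [Prod.ext_iff]
    rw [this, map_add, φ.map_smul]
    simp [hψdef, hβdef, smul_eq_mul]
  have hβ : β < 0 := by
    have hmem : ((r, max C v + 1) : (Fin M → ℝ) × ℝ) ∈ interior E :=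
      hW ⟨hrU, by simp only [Set.mem_Ioi]; have := le_max_left C v; linarith⟩
    have := hφ _ hmem
    rw [hsplit, hsplit] at this
    have hgt : v < max C v + 1 := by have := le_max_right C v; linarith
    nlinarith
  have hle : ∀ p ∈ E, φ p ≤ φ (r, v) := by
    intro p hp
    set a : (Fin M → ℝ) × ℝ := (r, max C v + 1) with ha
    have hamem : a ∈ interior E :=
      hW ⟨hrU, by simp only [Set.mem_Ioi]; have := le_max_left C v; linarith⟩
    by_contra hcon
    push_neg at hcon
    have key : ∀ θ : ℝ, 0 < θ → θ ≤ 1 → θ * φ a + (1 - θ) * φ p < φ (r, v) := by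
      intro θ hθ hθ1
      have hmem : θ • a + (1 - θ) • p ∈ interior E :=
        hE.combo_interior_self_mem_interior hamem hp hθ (by linarith) (by ring)
      have := hφ _ hmem
      rwa [map_add, φ.map_smul, φ.map_smul, smul_eq_mul, smul_eq_mul] at this
    have hd : 0 < φ p - φ (r, v) := by linarith
    set θ := min 1 ((φ p - φ (r, v)) / (2 * (|φ a - φ p| + 1))) with hθdef
    have hpos : 0 < (φ p - φ (r, v)) / (2 * (|φ a - φ p| + 1)) :=
      div_pos hd (by positivity)
    have hθpos : 0 < θ := lt_min one_pos hpos
    have hθ1 : θ ≤ 1 := min_le_left _ _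
    have := key θ hθpos hθ1
    have h2 : φ p + θ * (φ a - φ p) < φ (r, v) := by nlinarith
    have h3 : θ * (φ a - φ p) ≥ -(θ * (|φ a - φ p| + 1)) := by
      have := neg_abs_le (φ a - φ p)
      nlinarith
    have h4 : θ * (|φ a - φ p| + 1) ≤ (φ p - φ (r, v)) / 2 := by
      have hθle : θ ≤ (φ p - φ (r, v)) / (2 * (|φ a - φ p| + 1)) := min_le_right _ _
      rw [le_div_iff₀ (by positivity)] at hθle ⊢
      nlinarith [abs_nonneg (φ a - φ p)]
    linarith
  refine ⟨fun i => ψ (Pi.single i 1) / β, fun p hp => ?_⟩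
  have hkey : ψ p.1 + p.2 * β ≤ ψ r + v * β := by
    have h := hle (p.1, p.2) (by rwa [Prod.mk.eta])
    rwa [hsplit, hsplit] at h
  have hψlin : ∀ w : Fin M → ℝ, ψ w = ∑ i, w i * ψ (Pi.single i 1) := by
    intro w
    have hw : (w, (0:ℝ)) = ∑ i : Fin M, (w i) • ((Pi.single i 1 : Fin M → ℝ), (0:ℝ)) := by
      rw [Prod.ext_iff]
      constructor
      · simp only [Prod.fst_sum, Prod.smul_fst]
        ext j
        simp [Finset.sum_apply, Pi.single_apply, eq_comm]
      · simp [Prod.snd_sum]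
    simp only [hψdef]
    rw [hw, map_sum]
    refine Finset.sum_congr rfl fun i _ => ?_
    rw [φ.map_smul, smul_eq_mul]
  have hsum : ∑ i, (ψ (Pi.single i 1) / β) * (p.1 i - r i)
      = (ψ p.1 - ψ r) / β := by
    rw [hψlin p.1, hψlin r, ← Finset.sum_sub_distrib, Finset.sum_div]
    congr 1
    ext i
    ring
  rw [hsum]
  have : v - p.2 ≤ (ψ p.1 - ψ r) / β := by
    rw [le_div_iff_of_neg hβ]
    nlinarith
  linarith

open scoped Classical in
noncomputable def selAux {X : Type*} [MetricSpace X] (δ : ℝ) (ym : X → X) (y0 : X) :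
    List X → X → X
  | [] => fun _ => y0
  | z :: zs => (Metric.ball z δ).piecewise (fun _ => ym z) (selAux δ ym y0 zs)

lemma selAux_measurable {X : Type*} [MetricSpace X] [MeasurableSpace X] [OpensMeasurableSpace X]
    (δ : ℝ) (ym : X → X) (y0 : X) : ∀ l : List X, Measurable (selAux δ ym y0 l)
  | [] => measurable_const
  | _ :: zs => Measurable.piecewise Metric.isOpen_ball.measurableSet measurable_const
      (selAux_measurable δ ym y0 zs)

lemma selAux_spec {X : Type*} [MetricSpace X] (δ : ℝ) (ym : X → X) (y0 : X) :
    ∀ (l : List X) (x : X), (∃ z ∈ l, x ∈ Metric.ball z δ) →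
      ∃ z, x ∈ Metric.ball z δ ∧ selAux δ ym y0 l x = ym z
  | [], x, h => by simp at h
  | z :: zs, x, h => by
    classical
    by_cases hx : x ∈ Metric.ball z δ
    · exact ⟨z, hx, by simp [selAux, Set.piecewise_eq_of_mem _ _ _ hx]⟩
    · obtain ⟨z', hz', hball⟩ := h
      have hz'' : z' ∈ zs := by
        rcases List.mem_cons.mp hz' with rfl | h'
        · exact absurd hball hx
        · exact h'
      obtain ⟨w, hwb, hws⟩ := selAux_spec δ ym y0 zs x ⟨z', hz'', hball⟩
      exact ⟨w, hwb, by simp [selAux, Set.piecewise_eq_of_notMem _ _ _ hx, hws]⟩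

end Helpers

/-- (Proposition `t:OT-FP` (ii).) Under compactness and feasibility of the
moment class in a neighborhood of `r`, there is no duality gap for OT-FP and the dual
supremum is attained: there exists `λ* ∈ ℝ^M` with
`d(μ1, P_{f,r}) = ∫ min_y {c(x,y) − λ*ᵀ f̃(y)} μ1(dx)`. -/
theorem stmt_2 {M : ℕ} {X : Type*} [MetricSpace X] [CompactSpace X]
    [MeasurableSpace X] [BorelSpace X]
    (c : X → X → ℝ) (hc : Continuous fun p : X × X => c p.1 p.2)
    (hc_nonneg : ∀ x y : X, 0 ≤ c x y) (hc_diag : ∀ x : X, c x x = 0)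
    (f : X → Fin M → ℝ) (hf : Continuous f) (r : Fin M → ℝ)
    (μ1 : Measure X) [IsProbabilityMeasure μ1]
    (hfeas : ∃ U ∈ nhds r, ∀ r' ∈ U,
      (momentClass f r').Nonempty ∧
      ∃ γ : Measure (X × X), IsProbabilityMeasure γ ∧
        γ.map Prod.fst = μ1 ∧ γ.map Prod.snd ∈ momentClass f r') :
    ∃ lamStar : Fin M → ℝ,
      sInf {v : ℝ | ∃ γ : Measure (X × X), IsProbabilityMeasure γ ∧
          γ.map Prod.fst = μ1 ∧ γ.map Prod.snd ∈ momentClass f r ∧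
          v = ∫ p, c p.1 p.2 ∂γ}
        = ∫ x, (⨅ y : X, (c x y - ∑ i, lamStar i * (f y i - r i))) ∂μ1 := by
  classical
  obtain ⟨U, hU, hfeasU⟩ := hfeas
  haveI hXne : Nonempty X := by
    by_contra hne
    rw [not_nonempty_iff] at hne
    have h1 : μ1 Set.univ = 1 := measure_univ
    rw [Set.univ_eq_empty_iff.mpr hne] at h1
    simp at h1
  have hfi : ∀ i : Fin M, Continuous fun y => f y i := fun i => (continuous_apply i).comp hf
  -- the primal value set
  set S : Set ℝ := {v : ℝ | ∃ γ : Measure (X × X), IsProbabilityMeasure γ ∧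
      γ.map Prod.fst = μ1 ∧ γ.map Prod.snd ∈ momentClass f r ∧
      v = ∫ p, c p.1 p.2 ∂γ} with hSdef
  -- uniform bound on c
  obtain ⟨pm, -, hpm⟩ := isCompact_univ.exists_isMaxOn Set.univ_nonempty hc.continuousOn
  set C : ℝ := c pm.1 pm.2 with hCdef
  have hCbound : ∀ γ : Measure (X × X), IsProbabilityMeasure γ →
      ∫ p, c p.1 p.2 ∂γ ≤ C := by
    intro γ hγ
    haveI := hγ
    calc ∫ p, c p.1 p.2 ∂γ ≤ ∫ _p, C ∂γ :=
          integral_mono (integrable_cont γ hc) (integrable_const C)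
            (fun p => hpm (Set.mem_univ p))
      _ = C := by simp
  -- S is nonempty and bounded below
  obtain ⟨-, γ0, hγ0p, hγ0f, hγ0m⟩ := hfeasU r (mem_of_mem_nhds hU)
  have hSne : S.Nonempty := ⟨∫ p, c p.1 p.2 ∂γ0, γ0, hγ0p, hγ0f, hγ0m, rfl⟩
  have hSbdd : BddBelow S := by
    refine ⟨0, fun s hs => ?_⟩
    obtain ⟨γ, hγ, -, -, rfl⟩ := hs
    exact integral_nonneg fun p => hc_nonneg p.1 p.2
  -- the epigraph-like set E
  set E : Set ((Fin M → ℝ) × ℝ) := {p | ∃ γ : Measure (X × X), IsProbabilityMeasure γ ∧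
      γ.map Prod.fst = μ1 ∧ γ.map Prod.snd ∈ momentClass f p.1 ∧
      ∫ q, c q.1 q.2 ∂γ ≤ p.2} with hEdef
  have hEconv : Convex ℝ E := by
    rintro p ⟨γp, hγp, hfp, hmp, hip⟩ q ⟨γq, hγq, hfq, hmq, hiq⟩ a b ha hb hab
    haveI := hγp; haveI := hγq
    haveI := hmp.1; haveI := hmq.1
    set γ : Measure (X × X) := (ENNReal.ofReal a) • γp + (ENNReal.ofReal b) • γq with hγdef
    have hane : ENNReal.ofReal a ≠ ⊤ := ENNReal.ofReal_ne_top
    have hbne : ENNReal.ofReal b ≠ ⊤ := ENNReal.ofReal_ne_top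
    have habE : ENNReal.ofReal a + ENNReal.ofReal b = 1 := by
      rw [← ENNReal.ofReal_add ha hb, hab, ENNReal.ofReal_one]
    have hint_comb : ∀ (ν₁ ν₂ : Measure (X × X)) (g : X × X → ℝ), Integrable g ν₁ →
        Integrable g ν₂ →
        ∫ x, g x ∂((ENNReal.ofReal a) • ν₁ + (ENNReal.ofReal b) • ν₂)
          = a * ∫ x, g x ∂ν₁ + b * ∫ x, g x ∂ν₂ := by
      intro ν₁ ν₂ g hg1 hg2
      rw [integral_add_measure (hg1.smul_measure hane) (hg2.smul_measure hbne),
        integral_smul_measure, integral_smul_measure, ENNReal.toReal_ofReal ha,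
        ENNReal.toReal_ofReal hb, smul_eq_mul, smul_eq_mul]
    have hγprob : IsProbabilityMeasure γ := by
      constructor
      simp only [hγdef, Measure.add_apply, Measure.smul_apply, smul_eq_mul, measure_univ,
        mul_one]
      exact habE
    refine ⟨γ, hγprob, ?_, ⟨?_, ?_⟩, ?_⟩
    · rw [hγdef, Measure.map_add _ _ measurable_fst, Measure.map_smul, Measure.map_smul,
        hfp, hfq, ← add_smul, habE, one_smul]
    · -- probability measure of the second marginal
      haveI := hγprob
      exact Measure.isProbabilityMeasure_map measurable_snd.aemeasurable
    · intro i
      have hmapsnd : γ.map Prod.snd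
          = (ENNReal.ofReal a) • γp.map Prod.snd + (ENNReal.ofReal b) • γq.map Prod.snd := by
        rw [hγdef, Measure.map_add _ _ measurable_snd, Measure.map_smul, Measure.map_smul]
      rw [hmapsnd]
      have key : ∫ y, f y i ∂((ENNReal.ofReal a) • γp.map Prod.snd
          + (ENNReal.ofReal b) • γq.map Prod.snd)
          = a * ∫ y, f y i ∂(γp.map Prod.snd) + b * ∫ y, f y i ∂(γq.map Prod.snd) := by
        rw [integral_add_measure ((integrable_cont _ (hfi i)).smul_measure hane)
          ((integrable_cont _ (hfi i)).smul_measure hbne),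
          integral_smul_measure, integral_smul_measure, ENNReal.toReal_ofReal ha,
          ENNReal.toReal_ofReal hb, smul_eq_mul, smul_eq_mul]
      rw [key, hmp.2 i, hmq.2 i]
      simp [Prod.smul_fst, Pi.smul_apply, smul_eq_mul]
    · have := hint_comb γp γq _ (integrable_cont γp hc) (integrable_cont γq hc)
      rw [hγdef, this]
      have h1 : a * ∫ q, c q.1 q.2 ∂γp ≤ a * p.2 := mul_le_mul_of_nonneg_left hip ha
      have h2 : b * ∫ q, c q.1 q.2 ∂γq ≤ b * q.2 := mul_le_mul_of_nonneg_left hiq hb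
      calc a * ∫ q, c q.1 q.2 ∂γp + b * ∫ q, c q.1 q.2 ∂γq ≤ a * p.2 + b * q.2 := by linarith
        _ = (a • p + b • q).2 := by simp [smul_eq_mul]
  -- apply the separation lemma
  have hbox : ∀ r' ∈ U, ∀ t : ℝ, C < t → (r', t) ∈ E := by
    intro r' hr' t ht
    obtain ⟨-, γ, hγ, hγf, hγm⟩ := hfeasU r' hr'
    exact ⟨γ, hγ, hγf, hγm, le_of_lt (lt_of_le_of_lt (hCbound γ hγ) ht)⟩
  have hlow : ∀ t : ℝ, ((r, t) : (Fin M → ℝ) × ℝ) ∈ E → sInf S ≤ t := by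
    rintro t ⟨γ, hγ, hγf, hγm, hγi⟩
    exact le_trans (csInf_le hSbdd ⟨γ, hγ, hγf, hγm, rfl⟩) hγi
  obtain ⟨lam, hlam⟩ := exists_subgradient hEconv hU hbox hlow
  set lamStar : Fin M → ℝ := fun i => -lam i with hlamdef
  refine ⟨lamStar, ?_⟩
  -- the dual integrand
  set H : X × X → ℝ := fun p => c p.1 p.2 - ∑ i, lamStar i * (f p.2 i - r i) with hHdef
  have hH : Continuous H := by
    apply hc.sub
    exact continuous_finset_sum _ fun i _ =>
      continuous_const.mul (((hfi i).comp continuous_snd).sub continuous_const)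
  set g : X → ℝ := fun x => ⨅ y, H (x, y) with hgdef
  have hg : Continuous g := inf_continuous hH
  have hgoal : (∫ x, (⨅ y : X, (c x y - ∑ i, lamStar i * (f y i - r i))) ∂μ1)
      = ∫ x, g x ∂μ1 := rfl
  rw [hgoal]
  -- WEAK DUALITY: every element of S is at least ∫ g dμ1
  have hwd : ∀ s ∈ S, ∫ x, g x ∂μ1 ≤ s := by
    rintro s ⟨γ, hγ, hγf, hγm, rfl⟩
    haveI := hγ
    haveI := hγm.1
    have hsum_cont : Continuous fun p : X × X => ∑ i, lamStar i * (f p.2 i - r i) :=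
      continuous_finset_sum _ fun i _ =>
        continuous_const.mul (((hfi i).comp continuous_snd).sub continuous_const)
    have hmono : ∫ p, g p.1 ∂γ ≤ ∫ p, H p ∂γ :=
      integral_mono (integrable_cont γ (hg.comp continuous_fst)) (integrable_cont γ hH)
        (fun p => inf_le hH p.1 p.2)
    have hfsteq : ∫ p, g p.1 ∂γ = ∫ x, g x ∂μ1 := by
      rw [← hγf, integral_map measurable_fst.aemeasurable hg.aestronglyMeasurable]
    have hzero : ∫ p, (∑ i, lamStar i * (f p.2 i - r i)) ∂γ = 0 := by
      have h1 : ∫ p, (∑ i, lamStar i * (f p.2 i - r i)) ∂γ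
          = ∫ y, (∑ i, lamStar i * (f y i - r i)) ∂(γ.map Prod.snd) :=
        (integral_map measurable_snd.aemeasurable
          (continuous_finset_sum _ fun i _ =>
            continuous_const.mul ((hfi i).sub continuous_const)).aestronglyMeasurable).symm
      have hintzi : ∀ i : Fin M, Integrable (fun y => lamStar i * (f y i - r i))
          (γ.map Prod.snd) := fun i => by
        exact ((integrable_cont _ (hfi i)).sub (integrable_const (r i))).const_mul (lamStar i)
      rw [h1, integral_finset_sum _ (fun i _ => hintzi i)]
      refine Finset.sum_eq_zero fun i _ => ?_
      rw [integral_const_mul, integral_sub (integrable_cont _ (hfi i)) (integrable_const (r i)),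
        integral_const, hγm.2 i]
      simp
    have hHsplit : ∫ p, H p ∂γ
        = ∫ p, c p.1 p.2 ∂γ - ∫ p, (∑ i, lamStar i * (f p.2 i - r i)) ∂γ :=
      integral_sub (integrable_cont γ hc) (integrable_cont γ hsum_cont)
    rw [hfsteq, hHsplit, hzero] at hmono
    linarith
  have hge : ∫ x, g x ∂μ1 ≤ sInf S := le_csInf hSne hwd
  -- PRIMAL APPROXIMATION: sInf S ≤ ∫ g dμ1 + ε for all ε > 0
  have hub : ∀ ε : ℝ, 0 < ε → sInf S ≤ ∫ x, g x ∂μ1 + ε := by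
    intro ε hε
    obtain ⟨δ, hδ, hd⟩ := Metric.uniformContinuous_iff.mp
      (CompactSpace.uniformContinuous_of_continuous hH) (ε/2) (by linarith)
    choose ym hym using fun z => inf_exists_min hH z
    obtain ⟨T, -, hTfin, hTcov⟩ :=
      (isCompact_univ : IsCompact (Set.univ : Set X)).finite_cover_balls hδ
    set lst : List X := hTfin.toFinset.toList with hlst
    have hcov : ∀ x : X, ∃ z ∈ lst, x ∈ Metric.ball z δ := by
      intro x
      have := hTcov (Set.mem_univ x)
      rw [Set.mem_iUnion₂] at this
      obtain ⟨z, hz, hxz⟩ := this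
      exact ⟨z, by rw [hlst, Finset.mem_toList, Set.Finite.mem_toFinset]; exact hz, hxz⟩
    set y0 : X := Classical.arbitrary X with hy0
    set yε : X → X := selAux δ ym y0 lst with hyεdef
    have hyεm : Measurable yε := selAux_measurable δ ym y0 lst
    have hyspec : ∀ x : X, ∃ z, x ∈ Metric.ball z δ ∧ yε x = ym z :=
      fun x => selAux_spec δ ym y0 lst x (hcov x)
    -- the pointwise bound  H (x, yε x) ≤ g x + ε
    have hptwise : ∀ x : X, H (x, yε x) ≤ g x + ε := by
      intro x
      obtain ⟨z, hz, hzeq⟩ := hyspec x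
      rw [Metric.mem_ball] at hz
      have h1 : dist ((x, ym z) : X × X) (z, ym z) < δ := by
        simpa [Prod.dist_eq, dist_nonneg] using hz
      have h2 := hd h1
      rw [Real.dist_eq, abs_sub_lt_iff] at h2
      have h3 : H (z, ym z) ≤ g z := le_ciInf (hym z)
      -- g z ≤ g x + ε/2
      obtain ⟨yx, hyx⟩ := inf_attained hH x
      have h4 : dist ((z, yx) : X × X) (x, yx) < δ := by
        simpa [Prod.dist_eq, dist_nonneg, dist_comm] using hz
      have h5 := hd h4
      rw [Real.dist_eq, abs_sub_lt_iff] at h5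
      have h6 : g z ≤ H (z, yx) := inf_le hH z yx
      have hgx : g x = H (x, yx) := hyx
      have h7 : g z ≤ g x + ε/2 := by
        clear_value g H
        rw [hgx]; linarith [h5.1]
      rw [hzeq]
      clear_value g H
      linarith [h2.1, h3, h7]
    -- construct the coupling
    set Φ : X → X × X := fun x => (x, yε x) with hΦdef
    have hΦm : Measurable Φ := measurable_id.prodMk hyεm
    set γε : Measure (X × X) := μ1.map Φ with hγεdef
    haveI hγεp : IsProbabilityMeasure γε := Measure.isProbabilityMeasure_map hΦm.aemeasurable
    have hγεf : γε.map Prod.fst = μ1 := by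
      rw [hγεdef, Measure.map_map measurable_fst hΦm]
      simp [hΦdef, Function.comp_def]
    have hsndeq : γε.map Prod.snd = μ1.map yε := by
      rw [hγεdef, Measure.map_map measurable_snd hΦm]
      rfl
    haveI hyprob : IsProbabilityMeasure (μ1.map yε) :=
      Measure.isProbabilityMeasure_map hyεm.aemeasurable
    set r' : Fin M → ℝ := fun i => ∫ y, f y i ∂(μ1.map yε) with hr'def
    have hpE : ((r', ∫ q, c q.1 q.2 ∂γε) : (Fin M → ℝ) × ℝ) ∈ E := by
      refine ⟨γε, hγεp, hγεf, ?_, le_refl _⟩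
      rw [hsndeq]
      exact ⟨hyprob, fun i => rfl⟩
    have hsub := hlam _ hpE
    -- rewrite the right-hand side as a single integral
    have hceq : ∫ q, c q.1 q.2 ∂γε = ∫ x, c x (yε x) ∂μ1 := by
      rw [hγεdef, integral_map hΦm.aemeasurable hc.aestronglyMeasurable]
    have hr'eq : ∀ i, r' i = ∫ x, f (yε x) i ∂μ1 := by
      intro i
      simp only [hr'def]
      exact integral_map hyεm.aemeasurable (hfi i).aestronglyMeasurable
    have hintc : Integrable (fun x => c x (yε x)) μ1 := integrable_cont_comp μ1 hc hΦm
    have hintf : ∀ i, Integrable (fun x => f (yε x) i) μ1 :=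
      fun i => integrable_cont_comp μ1 (hfi i) hyεm
    have hintH : Integrable (fun x => H (x, yε x)) μ1 := integrable_cont_comp μ1 hH hΦm
    have hA : ∫ x, H (x, yε x) ∂μ1
        = ∫ x, c x (yε x) ∂μ1 - ∑ i, lamStar i * ((∫ x, f (yε x) i ∂μ1) - r i) := by
      have hintzi2 : ∀ i : Fin M, Integrable (fun x => lamStar i * (f (yε x) i - r i)) μ1 :=
        fun i => by
          exact ((hintf i).sub (integrable_const (r i))).const_mul (lamStar i)
      have hintsum : Integrable (fun x => ∑ i, lamStar i * (f (yε x) i - r i)) μ1 :=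
        integrable_finset_sum _ fun i _ => hintzi2 i
      have h2 : ∫ x, H (x, yε x) ∂μ1
          = ∫ x, c x (yε x) ∂μ1 - ∫ x, (∑ i, lamStar i * (f (yε x) i - r i)) ∂μ1 :=
        integral_sub hintc hintsum
      rw [h2]
      congr 1
      rw [integral_finset_sum _ fun i _ => hintzi2 i]
      refine Finset.sum_congr rfl fun i _ => ?_
      rw [integral_const_mul, integral_sub (hintf i) (integrable_const (r i)), integral_const]
      simp
    have hcomb : (∫ q, c q.1 q.2 ∂γε) + ∑ i, lam i * (r' i - r i)
        = ∫ x, H (x, yε x) ∂μ1 := by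
      rw [hceq, hA]
      have : ∑ i, lam i * (r' i - r i)
          = -∑ i, lamStar i * ((∫ x, f (yε x) i ∂μ1) - r i) := by
        rw [← Finset.sum_neg_distrib]
        refine Finset.sum_congr rfl fun i _ => ?_
        rw [hr'eq i, hlamdef]
        ring
      rw [this]
      ring
    rw [hcomb] at hsub
    have hfinal : ∫ x, H (x, yε x) ∂μ1 ≤ ∫ x, g x ∂μ1 + ε := by
      calc ∫ x, H (x, yε x) ∂μ1 ≤ ∫ x, (g x + ε) ∂μ1 :=
            integral_mono hintH ((integrable_cont μ1 hg).add (integrable_const ε))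
              hptwise
        _ = ∫ x, g x ∂μ1 + ε := by
            rw [integral_add (integrable_cont μ1 hg) (integrable_const ε), integral_const]
            simp
    linarith
  have hle2 : sInf S ≤ ∫ x, g x ∂μ1 := le_of_forall_pos_le_add hub
  exact le_antisymm hle2 hge
end

section
/- For each λ ∈ ℝ^M, the regularized dual functional φ*(λ) := inf_T ∫_X [ ε · D( T(x,·) ‖ μ2 ) − ∫_X T(x,dy) ℓ₀^λ(x,y) ] μ1(dx), where the infimum is over all Markov kernels T from X to X, satisfies φ*(λ) = − ∫_X B_{λ,ε}(x) μ1(dx). -/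
open MeasureTheory ProbabilityTheory Real
open scoped ENNReal Classical

/-- Relative entropy (Kullback–Leibler divergence) `D(ν‖μ)`, valued in `ℝ≥0∞`. -/
noncomputable def KL {Ω : Type*} [MeasurableSpace Ω] (ν μ : Measure Ω) : ℝ≥0∞ :=
  if ν ≪ μ ∧ Integrable (llr ν μ) ν then ENNReal.ofReal (∫ x, llr ν μ x ∂ν) else ⊤

section Aux

variable {α : Type*} [MeasurableSpace α]

lemma KL_of_ac {ν μ : Measure α} (h1 : ν ≪ μ) (h2 : Integrable (llr ν μ) ν) :
    KL ν μ = ENNReal.ofReal (∫ x, llr ν μ x ∂ν) := if_pos ⟨h1, h2⟩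

lemma KL_of_not {ν μ : Measure α} (h : ¬(ν ≪ μ ∧ Integrable (llr ν μ) ν)) :
    KL ν μ = ⊤ := if_neg h

lemma integrable_of_bdd {ρ : Measure α} [IsFiniteMeasure ρ] {φ : α → ℝ} {D : ℝ}
    (hm : AEStronglyMeasurable φ ρ) (hb : ∀ y, |φ y| ≤ D) : Integrable φ ρ :=
  Integrable.mono' (integrable_const D) hm
    (Filter.Eventually.of_forall fun y => by simpa [Real.norm_eq_abs] using hb y)

lemma integral_llr_nonneg {ν μ : Measure α} [IsProbabilityMeasure ν] [IsProbabilityMeasure μ]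
    (hνμ : ν ≪ μ) (h_int : Integrable (llr ν μ) ν) : 0 ≤ ∫ x, llr ν μ x ∂ν := by
  have hd : Measurable (ν.rnDeriv μ) := Measure.measurable_rnDeriv ν μ
  have hν_eq : μ.withDensity (ν.rnDeriv μ) = ν := Measure.withDensity_rnDeriv_eq ν μ hνμ
  have h1 : ∫⁻ x, (ν.rnDeriv μ x)⁻¹ ∂ν ≤ 1 := by
    rw [← lintegral_rnDeriv_mul hνμ (f := fun x => (ν.rnDeriv μ x)⁻¹) hd.inv.aemeasurable]
    calc ∫⁻ x, ν.rnDeriv μ x * (ν.rnDeriv μ x)⁻¹ ∂μ ≤ ∫⁻ _, 1 ∂μ := by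
          refine lintegral_mono fun x => ?_
          rcases eq_or_ne (ν.rnDeriv μ x) 0 with h | h
          · simp [h]
          rcases eq_or_ne (ν.rnDeriv μ x) ⊤ with h' | h'
          · simp [h']
          · rw [ENNReal.mul_inv_cancel h h']
      _ = 1 := by simp
  have h2 : Integrable (fun x => ((ν.rnDeriv μ x)⁻¹).toReal) ν :=
    integrable_toReal_of_lintegral_ne_top hd.inv.aemeasurable (h1.trans_lt ENNReal.one_lt_top).ne
  have h3 : ∫ x, ((ν.rnDeriv μ x)⁻¹).toReal ∂ν ≤ 1 := by
    rw [integral_toReal (f := fun x => (ν.rnDeriv μ x)⁻¹) hd.inv.aemeasurable ?_]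
    · have := ENNReal.toReal_mono ENNReal.one_ne_top h1
      simpa using this
    · filter_upwards [Measure.rnDeriv_pos hνμ] with x hx
      exact ENNReal.inv_lt_top.mpr hx
  have h4 : ∀ᵐ x ∂ν, 1 - ((ν.rnDeriv μ x)⁻¹).toReal ≤ llr ν μ x := by
    filter_upwards [Measure.rnDeriv_pos hνμ, hνμ.ae_le (Measure.rnDeriv_lt_top ν μ)] with x h0 ht
    have hp : 0 < (ν.rnDeriv μ x).toReal := ENNReal.toReal_pos h0.ne' ht.ne
    simp only [llr_def, ENNReal.toReal_inv]
    have hexp := Real.add_one_le_exp (-Real.log ((ν.rnDeriv μ x).toReal))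
    rw [Real.exp_neg, Real.exp_log hp] at hexp
    linarith
  calc (0:ℝ) ≤ 1 - ∫ x, ((ν.rnDeriv μ x)⁻¹).toReal ∂ν := by linarith
    _ = ∫ x, (1 - ((ν.rnDeriv μ x)⁻¹).toReal) ∂ν := by
        rw [integral_sub (integrable_const 1) h2]; simp
    _ ≤ ∫ x, llr ν μ x ∂ν := integral_mono_ae ((integrable_const 1).sub h2) h_int h4

lemma gibbs_ineq {ν μ : Measure α} [IsProbabilityMeasure ν] [IsProbabilityMeasure μ]
    (hνμ : ν ≪ μ) (h_int : Integrable (llr ν μ) ν) {φ : α → ℝ}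
    (hφν : Integrable φ ν) (hφμ : Integrable (fun x => exp (φ x)) μ) :
    ∫ x, φ x ∂ν - Real.log (∫ x, exp (φ x) ∂μ) ≤ ∫ x, llr ν μ x ∂ν := by
  haveI : IsProbabilityMeasure (μ.tilted φ) := isProbabilityMeasure_tilted hφμ
  have hacc : ν ≪ μ.tilted φ := hνμ.trans (absolutelyContinuous_tilted hφμ)
  have hint2 : Integrable (llr ν (μ.tilted φ)) ν :=
    integrable_llr_tilted_right hνμ hφν h_int hφμ
  have h0 : 0 ≤ ∫ x, llr ν (μ.tilted φ) x ∂ν := integral_llr_nonneg hacc hint2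
  rw [integral_llr_tilted_right hνμ hφν hφμ h_int] at h0
  linarith

end Aux

theorem aux_main {X : Type*} [MetricSpace X] [CompactSpace X] [MeasurableSpace X] [BorelSpace X]
    (μ1 μ2 : Measure X) [IsProbabilityMeasure μ1] [IsProbabilityMeasure μ2]
    (ε : ℝ) (hε : 0 < ε) (g : X → X → ℝ) (hg : Continuous fun p : X × X => g p.1 p.2) :
    (⨅ T : {T : Kernel X X // IsMarkovKernel T},
        ((ε : EReal) * ((∫⁻ x, KL (T.1 x) μ2 ∂μ1 : ℝ≥0∞) : EReal)
          - ((∫ x, ∫ y, g x y ∂(T.1 x) ∂μ1 : ℝ) : EReal)))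
      = ((-(∫ x, ε * Real.log (∫ y, Real.exp (ε⁻¹ * g x y) ∂μ2) ∂μ1) : ℝ) : EReal) := by
  haveI : Nonempty X := by
    by_contra hne
    rw [not_nonempty_iff] at hne
    have h1 : μ1 Set.univ = 1 := measure_univ
    rw [Set.univ_eq_empty_iff.mpr hne, measure_empty] at h1
    exact one_ne_zero h1.symm
  -- bound on g
  obtain ⟨p₀, -, hp₀⟩ := isCompact_univ.exists_isMaxOn Set.univ_nonempty
    (hg.abs.continuousOn (s := Set.univ))
  set C : ℝ := |g p₀.1 p₀.2| with hCdef
  have hC : ∀ x y, |g x y| ≤ C := fun x y => hp₀ (Set.mem_univ (x, y))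
  have hC0 : 0 ≤ C := abs_nonneg _
  set D : ℝ := ε⁻¹ * C with hDdef
  have hD0 : 0 ≤ D := mul_nonneg (inv_nonneg.mpr hε.le) hC0
  set u : X → X → ℝ := fun x y => ε⁻¹ * g x y with hu
  have hu' : ∀ x y, ε⁻¹ * g x y = u x y := fun _ _ => rfl
  have hgu : ∀ x y, g x y = ε * u x y := fun x y => by
    rw [← hu']; field_simp
  have hu_cont : Continuous fun p : X × X => u p.1 p.2 := continuous_const.mul hg
  have hub : ∀ x y, |u x y| ≤ D := fun x y => by
    rw [← hu', abs_mul, abs_of_pos (inv_pos.mpr hε), hDdef]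
    exact mul_le_mul_of_nonneg_left (hC x y) (inv_nonneg.mpr hε.le)
  have hux : ∀ x, Continuous (u x) := fun x => hu_cont.comp (Continuous.prodMk_right x)
  have huy : ∀ y, Continuous fun x => u x y := fun y => hu_cont.comp (Continuous.prodMk_left y)
  have hexp_le : ∀ x y, exp (u x y) ≤ exp D := fun x y => exp_le_exp.mpr (abs_le.1 (hub x y)).2
  have hexp_ge : ∀ x y, exp (-D) ≤ exp (u x y) := fun x y =>
    exp_le_exp.mpr (neg_le_of_abs_le (hub x y))
  have hexp_int : ∀ x, Integrable (fun y => exp (u x y)) μ2 := fun x =>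
    integrable_of_bdd ((continuous_exp.comp (hux x)).aestronglyMeasurable)
      (fun y => by rw [abs_of_pos (exp_pos _)]; exact hexp_le x y)
  set Z : X → ℝ := fun x => ∫ y, exp (u x y) ∂μ2 with hZ
  have hZ' : ∀ x, (∫ y, exp (u x y) ∂μ2) = Z x := fun _ => rfl
  have hZpos : ∀ x, 0 < Z x := fun x => integral_exp_pos (hexp_int x)
  have hZc : Continuous Z := by
    refine continuous_of_dominated
      (fun x => (continuous_exp.comp (hux x)).aestronglyMeasurable)
      (fun x => Filter.Eventually.of_forall fun y => ?_)
      (integrable_const (exp D))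
      (Filter.Eventually.of_forall fun y => continuous_exp.comp (huy y))
    rw [Real.norm_eq_abs, abs_of_pos (exp_pos _)]
    exact hexp_le x y
  have hZub : ∀ x, Z x ≤ exp D := fun x => by
    calc Z x ≤ ∫ _, exp D ∂μ2 :=
          integral_mono (hexp_int x) (integrable_const _) (fun y => hexp_le x y)
      _ = exp D := by simp
  have hZlb : ∀ x, exp (-D) ≤ Z x := fun x => by
    calc exp (-D) = ∫ _, exp (-D) ∂μ2 := by simp
      _ ≤ Z x := integral_mono (integrable_const _) (hexp_int x) (fun y => hexp_ge x y)
  set L : X → ℝ := fun x => Real.log (Z x) with hL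
  have hL' : ∀ x, Real.log (Z x) = L x := fun _ => rfl
  have hLc : Continuous L := hZc.log fun x => (hZpos x).ne'
  have hLb : ∀ x, |L x| ≤ D := fun x => by
    rw [abs_le]
    constructor
    · calc -D = Real.log (exp (-D)) := by rw [Real.log_exp]
        _ ≤ L x := Real.log_le_log (exp_pos _) (hZlb x)
    · calc L x ≤ Real.log (exp D) := Real.log_le_log (hZpos x) (hZub x)
        _ = D := Real.log_exp D
  have hLint : Integrable L μ1 := integrable_of_bdd hLc.aestronglyMeasurable hLb
  -- rewrite the goal in terms of u, Z, L
  simp only [hu', hZ', hL']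
  -- the Gibbs kernel
  have hdens_cont : Continuous fun p : X × X => ENNReal.ofReal (exp (u p.1 p.2) / Z p.1) :=
    ENNReal.continuous_ofReal.comp ((continuous_exp.comp hu_cont).div
      (hZc.comp continuous_fst) fun p => (hZpos p.1).ne')
  set T₀ : Kernel X X :=
    { toFun := fun x => μ2.tilted (u x)
      measurable' := by
        refine Measure.measurable_of_measurable_coe _ fun s hs => ?_
        simp_rw [tilted_apply μ2 _ s, hZ']
        exact Measurable.lintegral_prod_right'
          (f := fun p : X × X => ENNReal.ofReal (exp (u p.1 p.2) / Z p.1))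
          hdens_cont.measurable } with hT₀def
  haveI hT₀inst : IsMarkovKernel T₀ := ⟨fun x => isProbabilityMeasure_tilted (hexp_int x)⟩
  have hT₀app : ∀ x, T₀ x = μ2.tilted (u x) := fun _ => rfl
  set A : X → ℝ := fun x => ∫ y, u x y ∂(μ2.tilted (u x)) with hA
  have hA' : ∀ x, (∫ y, u x y ∂(μ2.tilted (u x))) = A x := fun _ => rfl
  have htilt_prob : ∀ x, IsProbabilityMeasure (μ2.tilted (u x)) := fun x =>
    isProbabilityMeasure_tilted (hexp_int x)
  have hu_int_tilt : ∀ x, Integrable (u x) (μ2.tilted (u x)) := fun x => by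
    haveI := htilt_prob x
    exact integrable_of_bdd ((hux x).aestronglyMeasurable) (hub x)
  have hAb : ∀ x, |A x| ≤ D := fun x => by
    haveI := htilt_prob x
    rw [← hA']
    calc |∫ y, u x y ∂(μ2.tilted (u x))| ≤ ∫ y, |u x y| ∂(μ2.tilted (u x)) := by
          simpa [Real.norm_eq_abs] using norm_integral_le_integral_norm (μ := μ2.tilted (u x)) (u x)
      _ ≤ ∫ _, D ∂(μ2.tilted (u x)) :=
          integral_mono (hu_int_tilt x).abs (integrable_const _) (fun y => hub x y)
      _ = D := by simp
  have hA_eq : ∀ x, A x = ∫ y, (exp (u x y) / Z x) * u x y ∂μ2 := fun x => by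
    rw [← hA', integral_tilted]
    simp only [smul_eq_mul, hZ']
  have hAc : Continuous A := by
    have hc2 : Continuous fun x => ∫ y, (exp (u x y) / Z x) * u x y ∂μ2 := by
      refine continuous_of_dominated (fun x => ?_)
        (fun x => Filter.Eventually.of_forall fun y => ?_)
        (integrable_const (exp D / exp (-D) * D)) (Filter.Eventually.of_forall fun y => ?_)
      · exact (((continuous_exp.comp (hux x)).div_const _).mul (hux x)).aestronglyMeasurable
      · rw [Real.norm_eq_abs, abs_mul,
          abs_of_nonneg (div_nonneg (exp_pos _).le (hZpos x).le)]
        exact mul_le_mul (div_le_div₀ (exp_pos D).le (hexp_le x y) (exp_pos _) (hZlb x))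
          (hub x y) (abs_nonneg _) (div_nonneg (exp_pos _).le (exp_pos _).le)
      · exact ((continuous_exp.comp (huy y)).div hZc (fun x => (hZpos x).ne')).mul (huy y)
    have he : A = fun x => ∫ y, (exp (u x y) / Z x) * u x y ∂μ2 := funext hA_eq
    rw [he]; exact hc2
  have hAint : Integrable A μ1 := integrable_of_bdd hAc.aestronglyMeasurable hAb
  have hllr : ∀ x, llr (μ2.tilted (u x)) μ2 =ᵐ[μ2.tilted (u x)] fun y => u x y - L x := by
    intro x
    have h1 := llr_tilted_left (Measure.AbsolutelyContinuous.rfl (μ := μ2)) (hexp_int x)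
      ((hux x).aemeasurable)
    have h2 : llr μ2 μ2 =ᵐ[μ2] fun _ => (0:ℝ) := by
      filter_upwards [Measure.rnDeriv_self μ2] with y hy
      simp [llr_def, hy]
    have h3 : llr (μ2.tilted (u x)) μ2 =ᵐ[μ2] fun y => u x y - L x := by
      filter_upwards [h1, h2] with y hy1 hy2
      rw [hy1, hy2, add_zero, hZ', hL']
    exact (tilted_absolutelyContinuous μ2 (u x)).ae_le h3
  have hllr_int : ∀ x, Integrable (llr (μ2.tilted (u x)) μ2) (μ2.tilted (u x)) := fun x => by
    haveI := htilt_prob x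
    exact (integrable_congr (hllr x)).mpr ((hu_int_tilt x).sub (integrable_const _))
  have hint_eq : ∀ x, ∫ y, llr (μ2.tilted (u x)) μ2 y ∂(μ2.tilted (u x)) = A x - L x := fun x => by
    haveI := htilt_prob x
    rw [integral_congr_ae (hllr x), integral_sub (hu_int_tilt x) (integrable_const _),
      integral_const]
    simp [hA']
  have hKL : ∀ x, KL (μ2.tilted (u x)) μ2 = ENNReal.ofReal (A x - L x) := fun x => by
    rw [KL_of_ac (tilted_absolutelyContinuous μ2 (u x)) (hllr_int x), hint_eq x]
  have hALnn : ∀ x, 0 ≤ A x - L x := fun x => by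
    haveI := htilt_prob x
    have h7 := integral_llr_nonneg (tilted_absolutelyContinuous μ2 (u x)) (hllr_int x)
    rwa [hint_eq x] at h7
  have hval : ((ε : EReal) * ((∫⁻ x, KL (T₀ x) μ2 ∂μ1 : ℝ≥0∞) : EReal)
      - ((∫ x, ∫ y, g x y ∂(T₀ x) ∂μ1 : ℝ) : EReal))
      = ((-(∫ x, ε * L x ∂μ1) : ℝ) : EReal) := by
    have e1 : ∫⁻ x, KL (T₀ x) μ2 ∂μ1 = ENNReal.ofReal (∫ x, (A x - L x) ∂μ1) := by
      simp_rw [hT₀app, hKL]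
      exact (ofReal_integral_eq_lintegral_ofReal (f := fun x => A x - L x)
        (hAint.sub hLint) (Filter.Eventually.of_forall hALnn)).symm
    have e2 : ∀ x, ∫ y, g x y ∂(T₀ x) = ε * A x := fun x => by
      rw [hT₀app]
      calc ∫ y, g x y ∂(μ2.tilted (u x)) = ∫ y, ε * u x y ∂(μ2.tilted (u x)) := by
            simp_rw [hgu]
        _ = ε * A x := by rw [integral_const_mul, hA']
    have e3 : ∫ x, ∫ y, g x y ∂(T₀ x) ∂μ1 = ε * ∫ x, A x ∂μ1 := by
      simp_rw [e2]; rw [integral_const_mul]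
    have hS : ∫ x, (A x - L x) ∂μ1 = ∫ x, A x ∂μ1 - ∫ x, L x ∂μ1 := integral_sub hAint hLint
    have hS0 : 0 ≤ ∫ x, (A x - L x) ∂μ1 := integral_nonneg hALnn
    rw [e1, e3, EReal.coe_ennreal_ofReal, max_eq_left hS0, ← EReal.coe_mul, ← EReal.coe_sub,
      EReal.coe_eq_coe_iff, hS, integral_const_mul]
    ring
  refine le_antisymm (iInf_le_of_le ⟨T₀, hT₀inst⟩ (le_of_eq hval)) (le_iInf ?_)
  rintro ⟨T, hT⟩
  haveI := hT
  show ((-(∫ x, ε * L x ∂μ1) : ℝ) : EReal)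
      ≤ (ε : EReal) * ((∫⁻ x, KL (T x) μ2 ∂μ1 : ℝ≥0∞) : EReal)
        - ((∫ x, ∫ y, g x y ∂(T x) ∂μ1 : ℝ) : EReal)
  rcases eq_or_ne (∫⁻ x, KL (T x) μ2 ∂μ1) ⊤ with hKtop | hKne
  · rw [hKtop, EReal.coe_ennreal_top, EReal.coe_mul_top_of_pos hε, EReal.top_sub_coe]
    exact le_top
  · have hW1 : StronglyMeasurable fun x => ∫ y, u x y ∂(T x) :=
      StronglyMeasurable.integral_kernel_prod_right (κ := T) (f := u)
        hu_cont.stronglyMeasurable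
    have hWu_b : ∀ x, |∫ y, u x y ∂(T x)| ≤ D := fun x => by
      calc |∫ y, u x y ∂(T x)| ≤ ∫ y, |u x y| ∂(T x) := by
            simpa [Real.norm_eq_abs] using norm_integral_le_integral_norm (μ := T x) (u x)
        _ ≤ ∫ _, D ∂(T x) :=
            integral_mono (integrable_of_bdd ((hux x).aestronglyMeasurable) (hub x)).abs
              (integrable_const _) (fun y => hub x y)
        _ = D := by simp
    set W : X → ℝ := fun x => (∫ y, u x y ∂(T x)) - L x with hWdef
    have hWm : AEStronglyMeasurable W μ1 := (hW1.sub hLc.stronglyMeasurable).aestronglyMeasurable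
    have hWb : ∀ x, |W x| ≤ D + D := fun x => by
      calc |W x| ≤ |∫ y, u x y ∂(T x)| + |L x| := abs_sub _ _
        _ ≤ D + D := add_le_add (hWu_b x) (hLb x)
    have hWint : Integrable W μ1 := integrable_of_bdd hWm hWb
    have hu_int_T : ∀ x, Integrable (u x) (T x) := fun x =>
      integrable_of_bdd ((hux x).aestronglyMeasurable) (hub x)
    have hpt : ∀ x, ENNReal.ofReal (W x) ≤ KL (T x) μ2 := fun x => by
      by_cases hcond : (T x ≪ μ2 ∧ Integrable (llr (T x) μ2) (T x))
      · rw [KL_of_ac hcond.1 hcond.2]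
        refine ENNReal.ofReal_le_ofReal ?_
        have h8 := gibbs_ineq hcond.1 hcond.2 (hu_int_T x) (hexp_int x)
        rw [hZ' x, hL' x] at h8
        exact h8
      · rw [KL_of_not hcond]; exact le_top
    have hchain : ENNReal.ofReal (∫ x, W x ∂μ1) ≤ ∫⁻ x, KL (T x) μ2 ∂μ1 := by
      calc ENNReal.ofReal (∫ x, W x ∂μ1) ≤ ENNReal.ofReal (∫ x, max (W x) 0 ∂μ1) :=
            ENNReal.ofReal_le_ofReal
              (integral_mono hWint hWint.pos_part (fun x => le_max_left _ _))
        _ = ∫⁻ x, ENNReal.ofReal (max (W x) 0) ∂μ1 :=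
            ofReal_integral_eq_lintegral_ofReal hWint.pos_part
              (Filter.Eventually.of_forall fun x => le_max_right _ _)
        _ = ∫⁻ x, ENNReal.ofReal (W x) ∂μ1 := lintegral_congr fun x => by
            rcases le_total (W x) 0 with h | h
            · rw [max_eq_right h, ENNReal.ofReal_zero, ENNReal.ofReal_eq_zero.mpr h]
            · rw [max_eq_left h]
        _ ≤ ∫⁻ x, KL (T x) μ2 ∂μ1 := lintegral_mono hpt
    have hWle : ∫ x, W x ∂μ1 ≤ (∫⁻ x, KL (T x) μ2 ∂μ1).toReal := by
      have h5 := ENNReal.toReal_mono hKne hchain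
      rcases le_total (∫ x, W x ∂μ1) 0 with h | h
      · exact h.trans ENNReal.toReal_nonneg
      · rwa [ENNReal.toReal_ofReal h] at h5
    have hIinner : ∀ x, ∫ y, g x y ∂(T x) = ε * ∫ y, u x y ∂(T x) := fun x => by
      simp_rw [hgu]; rw [integral_const_mul]
    have hint1 : Integrable (fun x => ∫ y, u x y ∂(T x)) μ1 :=
      integrable_of_bdd hW1.aestronglyMeasurable hWu_b
    have hWint_eq : ∫ x, W x ∂μ1 = (∫ x, ∫ y, u x y ∂(T x) ∂μ1) - ∫ x, L x ∂μ1 := by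
      simp only [hWdef]; exact integral_sub hint1 hLint
    have hI_eq : ∫ x, ∫ y, g x y ∂(T x) ∂μ1 = ε * ∫ x, ∫ y, u x y ∂(T x) ∂μ1 := by
      simp_rw [hIinner]; rw [integral_const_mul]
    have hKcoe : (((∫⁻ x, KL (T x) μ2 ∂μ1) : ℝ≥0∞) : EReal)
        = (((∫⁻ x, KL (T x) μ2 ∂μ1).toReal : ℝ) : EReal) := by
      conv_lhs => rw [← ENNReal.ofReal_toReal hKne]
      rw [EReal.coe_ennreal_ofReal, max_eq_left ENNReal.toReal_nonneg]
    rw [hKcoe, ← EReal.coe_mul, ← EReal.coe_sub, EReal.coe_le_coe_iff, hI_eq,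
      integral_const_mul]
    have h6 : ε * ∫ x, W x ∂μ1 ≤ ε * (∫⁻ x, KL (T x) μ2 ∂μ1).toReal :=
      mul_le_mul_of_nonneg_left hWle hε.le
    rw [hWint_eq, mul_sub] at h6
    linarith

/-- (Proposition `t:RegDual` (i).) For each `λ ∈ ℝ^M`, the regularized dual
functional `φ*(λ) = inf_T ∫ [ε D(T(x,·)‖μ2) − ∫ T(x,dy) ℓ₀^λ(x,y)] μ1(dx)`, the infimum
ranging over Markov kernels `T`, equals `−∫ B_{λ,ε} dμ1`. -/
theorem stmt_3 {M : ℕ} {X : Type*} [MetricSpace X] [CompactSpace X]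
    [MeasurableSpace X] [BorelSpace X]
    (c : X → X → ℝ) (hc : Continuous fun p : X × X => c p.1 p.2)
    (hc_nonneg : ∀ x y : X, 0 ≤ c x y) (hc_diag : ∀ x : X, c x x = 0)
    (f : X → Fin M → ℝ) (hf : Continuous f) (r : Fin M → ℝ)
    (μ1 μ2 : Measure X) [IsProbabilityMeasure μ1] [IsProbabilityMeasure μ2]
    (ε : ℝ) (hε : 0 < ε) (lam : Fin M → ℝ) :
    (⨅ T : {T : Kernel X X // IsMarkovKernel T},
        ((ε : EReal) * ((∫⁻ x, KL (T.1 x) μ2 ∂μ1 : ℝ≥0∞) : EReal)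
          - ((∫ x, ∫ y, ((∑ i, lam i * (f y i - r i)) - c x y) ∂(T.1 x) ∂μ1 : ℝ) : EReal)))
      = ((-(∫ x, ε * Real.log (∫ y,
            Real.exp (ε⁻¹ * ((∑ i, lam i * (f y i - r i)) - c x y)) ∂μ2) ∂μ1) : ℝ) : EReal) := by
  exact aux_main μ1 μ2 ε hε (fun x y => (∑ i, lam i * (f y i - r i)) - c x y)
    (Continuous.sub (continuous_finset_sum _ fun i _ =>
      continuous_const.mul (((continuous_apply i).comp (hf.comp continuous_snd)).sub
        continuous_const)) hc)
end

section
/- Suppose X is compact, μ1 and μ2 have support equal to all of X, and the feasibility and covariance assumptions hold (P_{f,r'} nonempty for r' near r with feasible couplings, and the covariance of f under μ2 positive definite). For each ε > 0 let γ^ε be the optimal coupling and λ^ε ∈ ℝ^M the dual optimizer of the regularized problem d_ε(μ1, P_{f,r}) = ∫ c dγ^ε + ε · D( γ^ε ‖ μ1 ⊗ μ2 ) = − ∫ B_{λ^ε,ε} dμ1. If ε_i ↓ 0, γ^{ε_i} converges weakly to γ⁰, and λ^{ε_i} → λ⁰, then γ⁰ is an optimal solution of the unregularized problem, i.e. γ⁰_1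 = μ1, γ⁰_2 ∈ P_{f,r}, and ∫ c dγ⁰ = d(μ1, P_{f,r}), and λ⁰ attains the dual supremum: ∫ c dγ⁰ = ∫_X ( inf_{y ∈ X} [ c(x,y) − (λ⁰)ᵀf̃(y) ] ) μ1(dx). -/
open MeasureTheory ProbabilityTheory Real Filter Topology
open scoped ENNReal Classical

/-- `B_{λ,ε}(x) = ε log ∫ exp(ε⁻¹ (λᵀ f̃(y) − c(x,y))) μ2(dy)`. -/
noncomputable def Bfun {M : ℕ} {X : Type*} [MeasurableSpace X] (c : X → X → ℝ)
    (f : X → Fin M → ℝ) (r lam : Fin M → ℝ) (μ2 : Measure X) (ε : ℝ) (x : X) : ℝ :=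
  ε * Real.log (∫ y, Real.exp (ε⁻¹ * ((∑ i, lam i * (f y i - r i)) - c x y)) ∂μ2)

section AuxLemmas


lemma cont_integrable {X : Type*} [MeasurableSpace X] [TopologicalSpace X] [CompactSpace X]
    [OpensMeasurableSpace X] [T2Space X] (μ : Measure X) [IsFiniteMeasure μ] {g : X → ℝ}
    (hg : Continuous g) : Integrable g μ :=
  hg.integrable_of_hasCompactSupport (HasCompactSupport.of_compactSpace g)

lemma measure_ext_of_integral {X : Type*} [MeasurableSpace X] [MetricSpace X] [CompactSpace X]
    [BorelSpace X] (μ ν : Measure X) [IsFiniteMeasure μ] [IsFiniteMeasure ν]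
    (h : ∀ g : C(X, ℝ), ∫ x, g x ∂μ = ∫ x, g x ∂ν) : μ = ν := by
  apply ext_of_forall_lintegral_eq_of_IsFiniteMeasure
  intro g
  have hgc : Continuous fun x => ((g x : NNReal) : ℝ) := NNReal.continuous_coe.comp g.continuous
  have hnn : ∀ x, (0:ℝ) ≤ (g x : NNReal) := fun x => (g x).2
  have key : ∀ (κ : Measure X), IsFiniteMeasure κ →
      ∫⁻ x, (g x : ℝ≥0∞) ∂κ = ENNReal.ofReal (∫ x, ((g x : NNReal) : ℝ) ∂κ) := by
    intro κ hκ
    rw [ofReal_integral_eq_lintegral_ofReal (cont_integrable κ hgc) (ae_of_all _ hnn)]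
    congr 1
    ext x
    simp [ENNReal.ofReal_coe_nnreal]
  rw [key μ ‹_›, key ν ‹_›]
  congr 1
  simpa using h ⟨fun x => ((g x : NNReal) : ℝ), hgc⟩

lemma continuous_param_integral {X Y : Type*} [MetricSpace X] [CompactSpace X]
    [MetricSpace Y] [CompactSpace Y] [MeasurableSpace Y] [OpensMeasurableSpace Y]
    {F : X × Y → ℝ} (hF : Continuous F) (μ : Measure Y) [IsProbabilityMeasure μ] :
    Continuous fun x => ∫ y, F (x, y) ∂μ := by
  rw [Metric.continuous_iff]
  intro b ε hε
  obtain ⟨δ, hδpos, hδ⟩ := Metric.uniformContinuous_iff.1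
    (CompactSpace.uniformContinuous_of_continuous hF) (ε/2) (by positivity)
  refine ⟨δ, hδpos, fun a ha => ?_⟩
  have hint : ∀ x : X, Integrable (fun y => F (x, y)) μ :=
    fun x => cont_integrable μ (hF.comp (Continuous.prodMk_right x))
  have h1 : dist (∫ y, F (a, y) ∂μ) (∫ y, F (b, y) ∂μ)
      = ‖∫ y, (F (a, y) - F (b, y)) ∂μ‖ := by
    rw [integral_sub (hint a) (hint b), Real.dist_eq, Real.norm_eq_abs]
  rw [h1]
  have h2 : ‖∫ y, (F (a, y) - F (b, y)) ∂μ‖ ≤ (ε/2) * (μ Set.univ).toReal := by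
    apply norm_integral_le_of_norm_le_const
    apply ae_of_all
    intro y
    have hd : dist ((a, y) : X × Y) (b, y) < δ := by
      rw [Prod.dist_eq]
      exact max_lt ha (by simpa using hδpos)
    have := hδ hd
    rw [Real.dist_eq] at this
    rw [Real.norm_eq_abs]
    linarith
  have h3 : (μ Set.univ).toReal = 1 := by simp
  rw [h3] at h2
  linarith

lemma continuous_param_iInf {X Y : Type*} [MetricSpace X] [CompactSpace X] [Nonempty X]
    [MetricSpace Y] [CompactSpace Y] [Nonempty Y]
    {F : X × Y → ℝ} (hF : Continuous F) :
    Continuous fun x => ⨅ y, F (x, y) := by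
  obtain ⟨p0, -, hp0⟩ := isCompact_univ.exists_isMinOn Set.univ_nonempty hF.continuousOn
  have hbdd : ∀ x : X, BddBelow (Set.range fun y => F (x, y)) := by
    intro x
    refine ⟨F p0, ?_⟩
    rintro - ⟨y, rfl⟩
    exact isMinOn_iff.1 hp0 _ (Set.mem_univ _)
  rw [Metric.continuous_iff]
  intro b ε hε
  obtain ⟨δ, hδpos, hδ⟩ := Metric.uniformContinuous_iff.1
    (CompactSpace.uniformContinuous_of_continuous hF) (ε/2) (by positivity)
  refine ⟨δ, hδpos, fun a ha => ?_⟩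
  have key : ∀ u v : X, dist u v < δ → (⨅ y, F (u, y)) ≤ (⨅ y, F (v, y)) + ε/2 := by
    intro u v huv
    have h1 : (⨅ y, F (u, y)) - ε/2 ≤ ⨅ y, F (v, y) := by
      apply le_ciInf
      intro y0
      have h2 : F (u, y0) ≤ F (v, y0) + ε/2 := by
        have hd : dist ((u, y0) : X × Y) (v, y0) < δ := by
          rw [Prod.dist_eq]; exact max_lt huv (by simpa using hδpos)
        have := hδ hd
        rw [Real.dist_eq] at this
        linarith [abs_sub_le_iff.1 this.le]
      linarith [ciInf_le (hbdd u) y0]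
    linarith
  have k1 := key a b ha
  have k2 := key b a (by rwa [dist_comm])
  rw [Real.dist_eq, abs_sub_lt_iff]
  constructor <;> linarith

lemma bfun_continuous {M : ℕ} {X : Type*} [MetricSpace X] [CompactSpace X] [Nonempty X]
    [MeasurableSpace X] [BorelSpace X]
    (c : X → X → ℝ) (hc : Continuous fun p : X × X => c p.1 p.2)
    (f : X → Fin M → ℝ) (hf : Continuous f) (r lam : Fin M → ℝ)
    (μ2 : Measure X) [IsProbabilityMeasure μ2] (ε : ℝ) :
    Continuous (Bfun c f r lam μ2 ε) := by
  set F : X × X → ℝ :=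
    fun p => Real.exp (ε⁻¹ * ((∑ i, lam i * (f p.2 i - r i)) - c p.1 p.2)) with hFdef
  have hS : Continuous fun y : X => ∑ i, lam i * (f y i - r i) := by
    apply continuous_finset_sum; intro i _
    exact continuous_const.mul (((continuous_apply i).comp hf).sub continuous_const)
  have hF : Continuous F :=
    Real.continuous_exp.comp (continuous_const.mul ((hS.comp continuous_snd).sub hc))
  have hG : Continuous fun x => ∫ y, F (x, y) ∂μ2 := continuous_param_integral hF μ2
  obtain ⟨p0, -, hp0⟩ := isCompact_univ.exists_isMinOn Set.univ_nonempty hF.continuousOn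
  have hpos : ∀ x, 0 < ∫ y, F (x, y) ∂μ2 := by
    intro x
    have h1 : ∀ y, F p0 ≤ F (x, y) := fun y => isMinOn_iff.1 hp0 _ (Set.mem_univ _)
    have h3 : ∫ _, F p0 ∂μ2 ≤ ∫ y, F (x, y) ∂μ2 :=
      integral_mono (integrable_const _) (cont_integrable μ2 (hF.comp (Continuous.prodMk_right x))) h1
    have h4 : ∫ _, F p0 ∂μ2 = F p0 := by simp
    have h5 : (0:ℝ) < F p0 := Real.exp_pos _
    linarith
  have hlog : Continuous fun x => Real.log (∫ y, F (x, y) ∂μ2) :=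
    hG.log fun x => (hpos x).ne'
  exact continuous_const.mul hlog

end AuxLemmas

/-- (Proposition `t:FP-FPRapprox`.) Let `(γ^ε, λ^ε)` be primal–dual optimal
for the regularized problem `d_ε(μ1, P_{f,r})`.  If `ε_i ↓ 0`, `γ^{ε_i} → γ⁰` weakly and
`λ^{ε_i} → λ⁰`, then `γ⁰` solves the unregularized problem OT-FP and `λ⁰` attains the dual
supremum: `∫ c dγ⁰ = d(μ1, P_{f,r}) = ∫ inf_y [c(x,y) − λ⁰ᵀ f̃(y)] μ1(dx)`. -/
theorem stmt_6 {M : ℕ} {X : Type*} [MetricSpace X] [CompactSpace X]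
    [MeasurableSpace X] [BorelSpace X]
    (c : X → X → ℝ) (hc : Continuous fun p : X × X => c p.1 p.2)
    (hc_nonneg : ∀ x y : X, 0 ≤ c x y) (hc_diag : ∀ x : X, c x x = 0)
    (f : X → Fin M → ℝ) (hf : Continuous f) (r : Fin M → ℝ)
    (μ1 μ2 : Measure X) [IsProbabilityMeasure μ1] [IsProbabilityMeasure μ2]
    [μ1.IsOpenPosMeasure] [μ2.IsOpenPosMeasure]
    (hfeas : ∃ U ∈ nhds r, ∀ r' ∈ U,
      (momentClass f r').Nonempty ∧
      ∃ γ : Measure (X × X), IsProbabilityMeasure γ ∧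
        γ.map Prod.fst = μ1 ∧ γ.map Prod.snd ∈ momentClass f r')
    (hcov : (Matrix.of fun i j : Fin M =>
        (∫ y, f y i * f y j ∂μ2) - (∫ y, f y i ∂μ2) * (∫ y, f y j ∂μ2)).PosDef)
    (γfam : ℝ → Measure (X × X)) (lamfam : ℝ → (Fin M → ℝ))
    (hprob : ∀ ε : ℝ, 0 < ε → IsProbabilityMeasure (γfam ε))
    (hmarg1 : ∀ ε : ℝ, 0 < ε → (γfam ε).map Prod.fst = μ1)
    (hmarg2 : ∀ ε : ℝ, 0 < ε → (γfam ε).map Prod.snd ∈ momentClass f r)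
    (hKLfin : ∀ ε : ℝ, 0 < ε → KL (γfam ε) (μ1.prod μ2) ≠ ⊤)
    -- primal optimality of `γ^ε`: its cost achieves `d_ε(μ1, P_{f,r})`
    (hopt : ∀ ε : ℝ, 0 < ε →
      sInf {v : EReal | ∃ γ : Measure (X × X), IsProbabilityMeasure γ ∧
          γ.map Prod.fst = μ1 ∧ γ.map Prod.snd ∈ momentClass f r ∧
          v = ((∫ p, c p.1 p.2 ∂γ : ℝ) : EReal)
                + (ε : EReal) * ((KL γ (μ1.prod μ2) : ℝ≥0∞) : EReal)}
        = (((∫ p, c p.1 p.2 ∂(γfam ε)) + ε * (KL (γfam ε) (μ1.prod μ2)).toReal : ℝ) : EReal))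
    -- dual optimality of `λ^ε`: `d_ε(μ1, P_{f,r}) = −∫ B_{λ^ε,ε} dμ1`
    (hdual : ∀ ε : ℝ, 0 < ε →
      (∫ p, c p.1 p.2 ∂(γfam ε)) + ε * (KL (γfam ε) (μ1.prod μ2)).toReal
        = -(∫ x, Bfun c f r (lamfam ε) μ2 ε x ∂μ1))
    (eSeq : ℕ → ℝ) (heSeq_pos : ∀ i, 0 < eSeq i) (heSeq : Tendsto eSeq atTop (𝓝 0))
    (γ0 : Measure (X × X)) [IsProbabilityMeasure γ0] (lam0 : Fin M → ℝ)
    (hweak : ∀ g : C(X × X, ℝ),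
      Tendsto (fun i => ∫ p, g p ∂(γfam (eSeq i))) atTop (𝓝 (∫ p, g p ∂γ0)))
    (hlam : Tendsto (fun i => lamfam (eSeq i)) atTop (𝓝 lam0)) :
    γ0.map Prod.fst = μ1 ∧ γ0.map Prod.snd ∈ momentClass f r ∧
    (∫ p, c p.1 p.2 ∂γ0)
      = sInf {v : ℝ | ∃ γ : Measure (X × X), IsProbabilityMeasure γ ∧
          γ.map Prod.fst = μ1 ∧ γ.map Prod.snd ∈ momentClass f r ∧
          v = ∫ p, c p.1 p.2 ∂γ} ∧
    (∫ p, c p.1 p.2 ∂γ0)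
      = ∫ x, (⨅ y : X, (c x y - ∑ i, lam0 i * (f y i - r i))) ∂μ1 := by
  classical
  have hXne : Nonempty X := by
    by_contra hcon
    rw [not_nonempty_iff] at hcon
    have h1 : μ1 Set.univ = 1 := measure_univ
    rw [Set.univ_eq_empty_iff.2 hcon, measure_empty] at h1
    exact zero_ne_one h1
  have hSg : Continuous fun y : X => ∑ i, lam0 i * (f y i - r i) := by
    apply continuous_finset_sum; intro i _
    exact continuous_const.mul (((continuous_apply i).comp hf).sub continuous_const)
  set φ : X × X → ℝ := fun p => c p.1 p.2 - ∑ i, lam0 i * (f p.2 i - r i) with hφdef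
  have hφ : Continuous φ := hc.sub (hSg.comp continuous_snd)
  set h : X → ℝ := fun x => ⨅ y, φ (x, y) with hhdef
  have hhcont : Continuous h := continuous_param_iInf hφ
  obtain ⟨p0, -, hp0⟩ := isCompact_univ.exists_isMinOn Set.univ_nonempty hφ.continuousOn
  have hbdd : ∀ x : X, BddBelow (Set.range fun y => φ (x, y)) := by
    intro x
    exact ⟨φ p0, by rintro - ⟨y, rfl⟩; exact isMinOn_iff.1 hp0 _ (Set.mem_univ _)⟩
  have hh_le : ∀ x y, h x ≤ φ (x, y) := fun x y => ciInf_le (hbdd x) y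
  -- first marginal of γ0
  have hm1 : γ0.map Prod.fst = μ1 := by
    haveI : IsProbabilityMeasure (γ0.map (Prod.fst : X × X → X)) :=
      Measure.isProbabilityMeasure_map measurable_fst.aemeasurable
    apply measure_ext_of_integral
    intro q
    have hq1 : Continuous fun p : X × X => q p.1 := q.continuous.comp continuous_fst
    have hconst : ∀ i : ℕ, ∫ p, q p.1 ∂(γfam (eSeq i)) = ∫ x, q x ∂μ1 := by
      intro i
      rw [← hmarg1 _ (heSeq_pos i), integral_map measurable_fst.aemeasurable
        q.continuous.aestronglyMeasurable]
    have hw := hweak ⟨fun p => q p.1, hq1⟩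
    simp only [ContinuousMap.coe_mk] at hw
    rw [show (fun i => ∫ p, q p.1 ∂(γfam (eSeq i))) = fun _ => ∫ x, q x ∂μ1
      from funext hconst] at hw
    have hu := tendsto_nhds_unique hw tendsto_const_nhds
    rw [integral_map measurable_fst.aemeasurable q.continuous.aestronglyMeasurable, ← hu]
  -- second marginal moments
  have hfi : ∀ i : Fin M, Continuous fun y => f y i := fun i => (continuous_apply i).comp hf
  have hmomγ0 : ∀ j : Fin M, ∫ p, f p.2 j ∂γ0 = r j := by
    intro j
    have hconst : ∀ i : ℕ, ∫ p, f p.2 j ∂(γfam (eSeq i)) = r j := by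
      intro i
      have h2 := (hmarg2 _ (heSeq_pos i)).2 j
      rwa [integral_map measurable_snd.aemeasurable ((hfi j).aestronglyMeasurable)] at h2
    have hw := hweak ⟨fun p => f p.2 j, (hfi j).comp continuous_snd⟩
    simp only [ContinuousMap.coe_mk] at hw
    rw [show (fun i => ∫ p, f p.2 j ∂(γfam (eSeq i))) = fun _ => r j from funext hconst] at hw
    exact tendsto_nhds_unique hw tendsto_const_nhds
  have hm2 : γ0.map Prod.snd ∈ momentClass f r := by
    refine ⟨Measure.isProbabilityMeasure_map measurable_snd.aemeasurable, fun j => ?_⟩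
    rw [integral_map measurable_snd.aemeasurable ((hfi j).aestronglyMeasurable)]
    exact hmomγ0 j
  -- weak duality
  have hwd : ∀ γ : Measure (X × X), IsProbabilityMeasure γ → γ.map Prod.fst = μ1 →
      γ.map Prod.snd ∈ momentClass f r → (∫ x, h x ∂μ1) ≤ ∫ p, c p.1 p.2 ∂γ := by
    intro γ hγp hγ1 hγ2
    haveI := hγp
    have hint_c : Integrable (fun p : X × X => c p.1 p.2) γ := cont_integrable γ hc
    have hint_g : Integrable (fun p : X × X => ∑ i, lam0 i * (f p.2 i - r i)) γ :=
      cont_integrable γ (hSg.comp continuous_snd)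
    have hmomγ : ∀ j, ∫ p, f p.2 j ∂γ = r j := by
      intro j
      have h2 := hγ2.2 j
      rwa [integral_map measurable_snd.aemeasurable ((hfi j).aestronglyMeasurable)] at h2
    have hg0 : ∫ p, (∑ i, lam0 i * (f p.2 i - r i)) ∂γ = 0 := by
      rw [integral_finset_sum]
      · apply Finset.sum_eq_zero
        intro j _
        have hint1 : Integrable (fun p : X × X => f p.2 j) γ :=
          cont_integrable γ ((hfi j).comp continuous_snd)
        have hint2 : Integrable (fun _ : X × X => r j) γ := integrable_const _
        rw [integral_const_mul, integral_sub hint1 hint2, hmomγ j, integral_const]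
        simp
      · intro j _
        exact cont_integrable γ ((continuous_const.mul (((continuous_apply j).comp hf).sub
          continuous_const)).comp continuous_snd)
    have hmono : ∫ p, h p.1 ∂γ ≤ ∫ p, φ p ∂γ :=
      integral_mono (cont_integrable γ (hhcont.comp continuous_fst)) (cont_integrable γ hφ)
        (fun p => hh_le p.1 p.2)
    have hsplit : ∫ p, φ p ∂γ = ∫ p, c p.1 p.2 ∂γ := by
      have he : ∫ p, φ p ∂γ
          = (∫ p, c p.1 p.2 ∂γ) - ∫ p, (∑ i, lam0 i * (f p.2 i - r i)) ∂γ :=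
        integral_sub hint_c hint_g
      rw [he, hg0, sub_zero]
    have hfirst : ∫ x, h x ∂μ1 = ∫ p, h p.1 ∂γ := by
      rw [← hγ1, integral_map measurable_fst.aemeasurable hhcont.aestronglyMeasurable]
    rw [hfirst]
    exact hsplit ▸ hmono
  -- cost convergence
  have hcost : Tendsto (fun i => ∫ p, c p.1 p.2 ∂(γfam (eSeq i))) atTop
      (𝓝 (∫ p, c p.1 p.2 ∂γ0)) := by
    have hw := hweak ⟨fun p => c p.1 p.2, hc⟩
    simpa using hw
  -- uniform bound K on |f y i - r i|
  have hfr : Continuous fun y : X => f y - r := hf.sub continuous_const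
  obtain ⟨ystar, -, hystar⟩ := isCompact_univ.exists_isMaxOn Set.univ_nonempty
    ((continuous_norm.comp hfr).continuousOn)
  set K : ℝ := ‖f ystar - r‖ with hKdef
  have hK0 : 0 ≤ K := norm_nonneg _
  have hK : ∀ (y : X) (i : Fin M), |f y i - r i| ≤ K := by
    intro y i
    have h1 : |(f y - r) i| ≤ ‖f y - r‖ := by
      rw [← Real.norm_eq_abs]; exact norm_le_pi_norm (f y - r) i
    have h2 : ‖f y - r‖ ≤ K := isMaxOn_iff.1 hystar y (Set.mem_univ _)
    simpa using h1.trans h2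
  -- the key eventual bound on -Bfun
  have hB : ∀ δ : ℝ, 0 < δ → ∀ᶠ i in atTop, ∀ x : X,
      -(Bfun c f r (lamfam (eSeq i)) μ2 (eSeq i) x) ≤ h x + δ := by
    intro δ hδ
    obtain ⟨ρ, hρpos, hρ⟩ := Metric.uniformContinuous_iff.1
      (CompactSpace.uniformContinuous_of_continuous hφ) (δ/4) (by positivity)
    obtain ⟨t, ht⟩ := isCompact_univ.elim_finite_subcover
      (fun z : X => Metric.ball z (ρ/2)) (fun z => Metric.isOpen_ball)
      (fun x _ => Set.mem_iUnion.2 ⟨x, Metric.mem_ball_self (by positivity)⟩)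
    have htne : t.Nonempty := by
      obtain ⟨x⟩ := hXne
      obtain ⟨z, hz, -⟩ := Set.mem_iUnion₂.1 (ht (Set.mem_univ x))
      exact ⟨z, hz⟩
    set m : ℝ := t.inf' htne fun z => (μ2 (Metric.ball z (ρ/2))).toReal with hmdef
    have hm_pos : 0 < m := by
      rw [hmdef, Finset.lt_inf'_iff]
      intro z hz
      exact ENNReal.toReal_pos (Metric.measure_ball_pos μ2 z (by positivity)).ne'
        (measure_ne_top _ _)
    have hm_le : ∀ y : X, m ≤ (μ2 (Metric.ball y ρ)).toReal := by
      intro y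
      obtain ⟨z, hz, hyz⟩ := Set.mem_iUnion₂.1 (ht (Set.mem_univ y))
      have hsub : Metric.ball z (ρ/2) ⊆ Metric.ball y ρ := by
        intro w hw
        rw [Metric.mem_ball] at hw ⊢
        have h1 : dist z y < ρ/2 := by rw [dist_comm]; exact Metric.mem_ball.1 hyz
        have h2 := dist_triangle w z y
        linarith
      calc m ≤ (μ2 (Metric.ball z (ρ/2))).toReal := Finset.inf'_le _ hz
        _ ≤ _ := ENNReal.toReal_mono (measure_ne_top _ _) (measure_mono hsub)
    have hev1 : ∀ᶠ i in atTop, eSeq i * (-Real.log m) < δ/4 := by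
      have h0 : Tendsto (fun i => eSeq i * (-Real.log m)) atTop (𝓝 (0 * (-Real.log m))) :=
        heSeq.mul_const _
      rw [zero_mul] at h0
      exact h0.eventually_lt_const (by positivity)
    have hev2 : ∀ᶠ i in atTop, dist (lamfam (eSeq i)) lam0 < δ/(4*(M*K+1)) :=
      Metric.tendsto_nhds.1 hlam _ (by positivity)
    filter_upwards [hev1, hev2] with i h1 h2
    intro x
    set ε := eSeq i with hεdef
    have hε : 0 < ε := heSeq_pos i
    set lam := lamfam (eSeq i) with hlamdef
    have hcorr : ∀ y : X, |∑ j, (lam0 j - lam j) * (f y j - r j)| ≤ δ/4 := by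
      intro y
      have hterm : ∀ j : Fin M, |(lam0 j - lam j) * (f y j - r j)| ≤ dist lam lam0 * K := by
        intro j
        rw [abs_mul]
        have ha : |lam0 j - lam j| ≤ dist lam lam0 := by
          rw [abs_sub_comm, ← Real.dist_eq]
          exact dist_le_pi_dist lam lam0 j
        exact mul_le_mul ha (hK y j) (abs_nonneg _) dist_nonneg
      have hgoal : |∑ j, (lam0 j - lam j) * (f y j - r j)| ≤ M * (dist lam lam0 * K) := by
        calc |∑ j, (lam0 j - lam j) * (f y j - r j)|
            ≤ ∑ j, |(lam0 j - lam j) * (f y j - r j)| := Finset.abs_sum_le_sum_abs _ _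
          _ ≤ ∑ _j : Fin M, dist lam lam0 * K := Finset.sum_le_sum fun j _ => hterm j
          _ = M * (dist lam lam0 * K) := by
              rw [Finset.sum_const, Finset.card_univ, Fintype.card_fin, nsmul_eq_mul]
      have hd0 : (0:ℝ) ≤ dist lam lam0 := dist_nonneg
      have hM0 : (0:ℝ) ≤ (M : ℝ) := Nat.cast_nonneg M
      have h3 : dist lam lam0 * (4*((M:ℝ)*K+1)) ≤ δ :=
        (le_div_iff₀ (by positivity)).1 h2.le
      nlinarith [mul_nonneg hd0 hK0, mul_nonneg hM0 (mul_nonneg hd0 hK0)]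
    obtain ⟨y0, -, hy0⟩ := isCompact_univ.exists_isMinOn Set.univ_nonempty
      ((hφ.comp (Continuous.prodMk_right x)).continuousOn)
    have hy0h : φ (x, y0) ≤ h x := le_ciInf fun y => isMinOn_iff.1 hy0 y (Set.mem_univ y)
    have hball : ∀ y ∈ Metric.ball y0 ρ,
        c x y - ∑ j, lam j * (f y j - r j) ≤ h x + δ/2 := by
      intro y hy
      have hd : dist ((x, y) : X × X) (x, y0) < ρ := by
        rw [Prod.dist_eq]
        exact max_lt (by simpa using hρpos) (Metric.mem_ball.1 hy)
      have hφy := hρ hd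
      rw [Real.dist_eq] at hφy
      have h4 : φ (x, y) ≤ φ (x, y0) + δ/4 := by
        linarith [(abs_sub_le_iff.1 hφy.le).1]
      have h5 : c x y - ∑ j, lam j * (f y j - r j)
          = φ (x, y) + ∑ j, (lam0 j - lam j) * (f y j - r j) := by
        have hsum : ∑ j, (lam0 j - lam j) * (f y j - r j)
            = (∑ j, lam0 j * (f y j - r j)) - ∑ j, lam j * (f y j - r j) := by
          rw [← Finset.sum_sub_distrib]
          congr 1; ext j; ring
        rw [hφdef]
        simp only []
        rw [hsum]; ring
      have h6 := (abs_le.1 (hcorr y)).2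
      calc c x y - ∑ j, lam j * (f y j - r j)
          = φ (x, y) + ∑ j, (lam0 j - lam j) * (f y j - r j) := h5
        _ ≤ (φ (x, y0) + δ/4) + δ/4 := add_le_add h4 h6
        _ ≤ (h x + δ/4) + δ/4 := by
            linarith
        _ = h x + δ/2 := by ring
    set A : ℝ := Real.exp (ε⁻¹ * (-(h x + δ/2))) with hAdef
    have hexp_cont : Continuous fun y : X =>
        Real.exp (ε⁻¹ * ((∑ j, lam j * (f y j - r j)) - c x y)) := by
      apply Real.continuous_exp.comp
      apply continuous_const.mul
      exact (continuous_finset_sum _ fun j _ => continuous_const.mul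
        (((continuous_apply j).comp hf).sub continuous_const)).sub
        (hc.comp (Continuous.prodMk_right x))
    have hIntExp : Integrable (fun y : X =>
        Real.exp (ε⁻¹ * ((∑ j, lam j * (f y j - r j)) - c x y))) μ2 :=
      cont_integrable μ2 hexp_cont
    have hlb : ∀ y ∈ Metric.ball y0 ρ,
        A ≤ Real.exp (ε⁻¹ * ((∑ j, lam j * (f y j - r j)) - c x y)) := by
      intro y hy
      rw [hAdef, Real.exp_le_exp]
      have h7 := hball y hy
      have h8 : -(h x + δ/2) ≤ (∑ j, lam j * (f y j - r j)) - c x y := by linarith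
      exact mul_le_mul_of_nonneg_left h8 (inv_nonneg.2 hε.le)
    have hstep1 : A * (μ2 (Metric.ball y0 ρ)).toReal
        ≤ ∫ y in Metric.ball y0 ρ,
            Real.exp (ε⁻¹ * ((∑ j, lam j * (f y j - r j)) - c x y)) ∂μ2 :=
      setIntegral_ge_of_const_le_real measurableSet_ball (measure_ne_top _ _) hlb
        hIntExp.integrableOn
    have hstep2 : ∫ y in Metric.ball y0 ρ,
            Real.exp (ε⁻¹ * ((∑ j, lam j * (f y j - r j)) - c x y)) ∂μ2
        ≤ ∫ y, Real.exp (ε⁻¹ * ((∑ j, lam j * (f y j - r j)) - c x y)) ∂μ2 :=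
      setIntegral_le_integral hIntExp (ae_of_all _ fun y => (Real.exp_pos _).le)
    have hApos : 0 < A := Real.exp_pos _
    have hAm : A * m ≤ ∫ y, Real.exp (ε⁻¹ * ((∑ j, lam j * (f y j - r j)) - c x y)) ∂μ2 := by
      have h9 : A * m ≤ A * (μ2 (Metric.ball y0 ρ)).toReal :=
        mul_le_mul_of_nonneg_left (hm_le y0) hApos.le
      linarith
    have hIpos : 0 < ∫ y, Real.exp (ε⁻¹ * ((∑ j, lam j * (f y j - r j)) - c x y)) ∂μ2 :=
      lt_of_lt_of_le (by positivity) hAm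
    have hlog : Real.log (A * m)
        ≤ Real.log (∫ y, Real.exp (ε⁻¹ * ((∑ j, lam j * (f y j - r j)) - c x y)) ∂μ2) :=
      (Real.log_le_log_iff (by positivity) hIpos).2 hAm
    have hlogAm : Real.log (A * m) = ε⁻¹ * (-(h x + δ/2)) + Real.log m := by
      rw [Real.log_mul hApos.ne' hm_pos.ne', hAdef, Real.log_exp]
    have hBval : Bfun c f r lam μ2 ε x
        = ε * Real.log (∫ y, Real.exp (ε⁻¹ * ((∑ j, lam j * (f y j - r j)) - c x y)) ∂μ2) :=
      rfl
    have h9 : ε * Real.log (A * m) ≤ Bfun c f r lam μ2 ε x := by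
      rw [hBval]
      exact mul_le_mul_of_nonneg_left hlog hε.le
    have h10 : ε * (ε⁻¹ * (-(h x + δ/2)) + Real.log m)
        = -(h x + δ/2) + ε * Real.log m := by
      rw [mul_add, ← mul_assoc, mul_inv_cancel₀ hε.ne', one_mul]
    rw [hlogAm, h10] at h9
    have h11 : ε * Real.log m = -(ε * (-Real.log m)) := by ring
    linarith
  -- upper bound on limit cost
  have hIle : ∫ x, h x ∂μ1 ≤ ∫ p, c p.1 p.2 ∂γ0 := hwd γ0 ‹_› hm1 hm2
  have hup : ∀ δ : ℝ, 0 < δ → (∫ p, c p.1 p.2 ∂γ0) ≤ (∫ x, h x ∂μ1) + δ := by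
    intro δ hδ
    have hev : ∀ᶠ i in atTop,
        (∫ p, c p.1 p.2 ∂(γfam (eSeq i))) ≤ (∫ x, h x ∂μ1) + δ := by
      filter_upwards [hB δ hδ] with i hi
      have hε := heSeq_pos i
      have hd := hdual (eSeq i) hε
      have hKL0 : 0 ≤ (KL (γfam (eSeq i)) (μ1.prod μ2)).toReal := ENNReal.toReal_nonneg
      have hBint : Integrable (Bfun c f r (lamfam (eSeq i)) μ2 (eSeq i)) μ1 :=
        cont_integrable μ1 (bfun_continuous c hc f hf r _ μ2 _)
      have h1 : (∫ p, c p.1 p.2 ∂(γfam (eSeq i)))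
          ≤ -(∫ x, Bfun c f r (lamfam (eSeq i)) μ2 (eSeq i) x ∂μ1) := by
        rw [← hd]
        nlinarith [mul_nonneg hε.le hKL0]
      have h2 : -(∫ x, Bfun c f r (lamfam (eSeq i)) μ2 (eSeq i) x ∂μ1)
          = ∫ x, -(Bfun c f r (lamfam (eSeq i)) μ2 (eSeq i) x) ∂μ1 := (integral_neg _).symm
      have h3 : ∫ x, -(Bfun c f r (lamfam (eSeq i)) μ2 (eSeq i) x) ∂μ1
          ≤ ∫ x, (h x + δ) ∂μ1 :=
        integral_mono hBint.neg ((cont_integrable μ1 hhcont).add (integrable_const _)) hi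
      have h4 : ∫ x, (h x + δ) ∂μ1 = (∫ x, h x ∂μ1) + δ := by
        rw [integral_add (cont_integrable μ1 hhcont) (integrable_const _), integral_const]
        simp
      linarith [h2 ▸ h1]
    exact le_of_tendsto hcost hev
  have hle : (∫ p, c p.1 p.2 ∂γ0) ≤ ∫ x, h x ∂μ1 := by
    by_contra hcon
    push_neg at hcon
    have := hup ((∫ p, c p.1 p.2 ∂γ0 - ∫ x, h x ∂μ1)/2) (by linarith)
    linarith
  have heq4 : (∫ p, c p.1 p.2 ∂γ0) = ∫ x, h x ∂μ1 := le_antisymm hle hIle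
  refine ⟨hm1, hm2, ?_, ?_⟩
  · apply le_antisymm
    · refine le_csInf ⟨∫ p, c p.1 p.2 ∂γ0, ⟨γ0, ‹_›, hm1, hm2, rfl⟩⟩ ?_
      rintro v ⟨γ, hγp, hγ1, hγ2, rfl⟩
      calc ∫ p, c p.1 p.2 ∂γ0 = ∫ x, h x ∂μ1 := heq4
        _ ≤ ∫ p, c p.1 p.2 ∂γ := hwd γ hγp hγ1 hγ2
    · refine csInf_le ⟨∫ x, h x ∂μ1, ?_⟩ ⟨γ0, ‹_›, hm1, hm2, rfl⟩
      rintro v ⟨γ, hγp, hγ1, hγ2, rfl⟩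
      exact hwd γ hγp hγ1 hγ2
  · exact heq4
end

section
/- Let R : ℝ^M → [0,∞) be convex with R(0) = 0 and R(δ) > 0 for δ ≠ 0, and let R*(x) := sup{ δᵀx − R(δ) : δ ∈ ℝ^M } be its convex conjugate, assumed everywhere finite. Then the dual functional of the penalized problem, φ*(λ) := inf over Borel probability measures μ on X, couplings γ with γ_1 = μ1 and γ_2 = μ, and δ ∈ ℝ^M, of [ ∫ c dγ + ε · D( γ ‖ μ1 ⊗ μ2 ) + R(δ) + Σ_{i=1}^M λ_i ( δ_i − ∫ f̃_i dμ ) ], satisfies φ*(λ) = − ∫_X B_{λ,ε}(x) μ1(dx) − R*(−λ) for every λ ∈ ℝ^M. -/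
open MeasureTheory ProbabilityTheory Real Matrix
open scoped ENNReal Classical

lemma my_integral_llr_nonneg {Ω : Type*} [MeasurableSpace Ω] {γ ν : Measure Ω}
    [IsProbabilityMeasure γ] [IsProbabilityMeasure ν] (h : γ ≪ ν)
    (hint : Integrable (llr γ ν) γ) : 0 ≤ ∫ x, llr γ ν x ∂γ := by
  set D := γ.rnDeriv ν with hD
  have hpos : ∀ᵐ x ∂γ, 0 < D x := Measure.rnDeriv_pos h
  have hlt : ∀ᵐ x ∂γ, D x < ⊤ := h.ae_le (Measure.rnDeriv_lt_top γ ν)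
  have hmeas : Measurable D := Measure.measurable_rnDeriv γ ν
  have hlint : ∫⁻ x, (D x)⁻¹ ∂γ ≤ 1 := by
    show ∫⁻ x, D⁻¹ x ∂γ ≤ 1
    rw [← MeasureTheory.lintegral_rnDeriv_mul h (hmeas.inv.aemeasurable)]
    calc ∫⁻ x, D x * (D x)⁻¹ ∂ν ≤ ∫⁻ _, 1 ∂ν := by
          refine lintegral_mono fun x => ?_
          exact ENNReal.mul_inv_le_one (D x)
      _ = 1 := by simp
  have hintinv : Integrable (fun x => ((D x)⁻¹).toReal) γ := by
    refine integrable_toReal_of_lintegral_ne_top hmeas.inv.aemeasurable ?_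
    exact (hlint.trans_lt ENNReal.one_lt_top).ne
  have hIle : ∫ x, ((D x)⁻¹).toReal ∂γ ≤ 1 := by
    show ∫ x, (D⁻¹ x).toReal ∂γ ≤ 1
    rw [integral_toReal hmeas.inv.aemeasurable
      (hpos.mono fun x hx => ENNReal.inv_lt_top.2 hx)]
    exact ENNReal.toReal_le_of_le_ofReal zero_le_one (by simpa using hlint)
  have hae : ∀ᵐ x ∂γ, -llr γ ν x ≤ ((D x)⁻¹).toReal - 1 := by
    filter_upwards [hpos, hlt] with x hx hx'
    have hxt : 0 < (D x).toReal := ENNReal.toReal_pos hx.ne' hx'.ne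
    have : -llr γ ν x = log ((D x).toReal)⁻¹ := by
      rw [llr, log_inv]
    rw [this, ENNReal.toReal_inv]
    exact Real.log_le_sub_one_of_pos (inv_pos.2 hxt)
  have h2 : ∫ x, -llr γ ν x ∂γ ≤ ∫ x, (((D x)⁻¹).toReal - 1) ∂γ :=
    integral_mono_ae hint.neg (hintinv.sub (integrable_const 1)) hae
  rw [integral_neg, integral_sub hintinv (integrable_const 1)] at h2
  simp only [integral_const, measure_univ, ENNReal.toReal_one, smul_eq_mul, one_mul, probReal_univ, mul_one] at h2
  linarith


lemma integrable_of_forall_abs_le {Ω : Type*} [MeasurableSpace Ω] {μ : Measure Ω}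
    [IsFiniteMeasure μ] {u : Ω → ℝ} (hm : AEStronglyMeasurable u μ) {K : ℝ}
    (hb : ∀ x, |u x| ≤ K) : Integrable u μ :=
  Integrable.mono' (integrable_const K) hm
    (Filter.Eventually.of_forall fun x => by simpa [Real.norm_eq_abs] using hb x)

lemma bdd_of_continuous {Y : Type*} [TopologicalSpace Y] [CompactSpace Y] {u : Y → ℝ}
    (hu : Continuous u) : ∃ K, 0 ≤ K ∧ ∀ x, |u x| ≤ K := by
  obtain ⟨C, hC⟩ := isCompact_univ.exists_bound_of_continuousOn hu.continuousOn
  exact ⟨max C 0, le_max_right _ _, fun x =>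
    le_trans (by simpa [Real.norm_eq_abs] using hC x (Set.mem_univ x)) (le_max_left _ _)⟩


/-- (Proposition `t:RegDualQ`.) For a convex penalty `R ≥ 0` vanishing
only at the origin, with everywhere-finite convex conjugate `R*`, the dual functional of the
penalized problem OT-FPRP satisfies `φ*(λ) = −∫ B_{λ,ε} dμ1 − R*(−λ)`. -/
theorem stmt_10 {M : ℕ} {X : Type*} [MetricSpace X] [CompactSpace X]
    [MeasurableSpace X] [BorelSpace X]
    (c : X → X → ℝ) (hc : Continuous fun p : X × X => c p.1 p.2)
    (hc_nonneg : ∀ x y : X, 0 ≤ c x y) (hc_diag : ∀ x : X, c x x = 0)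
    (f : X → Fin M → ℝ) (hf : Continuous f) (r : Fin M → ℝ)
    (μ1 μ2 : Measure X) [IsProbabilityMeasure μ1] [IsProbabilityMeasure μ2]
    (ε : ℝ) (hε : 0 < ε)
    (R : (Fin M → ℝ) → ℝ) (hR_cvx : ConvexOn ℝ Set.univ R)
    (hR_nonneg : ∀ δ, 0 ≤ R δ) (hR_zero : R 0 = 0)
    (hR_pos : ∀ δ : Fin M → ℝ, δ ≠ 0 → 0 < R δ)
    (Rstar : (Fin M → ℝ) → ℝ)
    (hRstar : ∀ x : Fin M → ℝ,
      IsLUB (Set.range fun δ : Fin M → ℝ => δ ⬝ᵥ x - R δ) (Rstar x))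
    (lam : Fin M → ℝ) :
    sInf {v : EReal | ∃ (γ : Measure (X × X)) (δ : Fin M → ℝ),
        IsProbabilityMeasure γ ∧ γ.map Prod.fst = μ1 ∧
        v = ((∫ p, c p.1 p.2 ∂γ : ℝ) : EReal)
              + (ε : EReal) * ((KL γ (μ1.prod μ2) : ℝ≥0∞) : EReal)
              + ((R δ + ∑ i, lam i * (δ i - ∫ y, (f y i - r i) ∂(γ.map Prod.snd)) : ℝ) : EReal)}
      = ((-(∫ x, Bfun c f r lam μ2 ε x ∂μ1) - Rstar (-lam) : ℝ) : EReal) := by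
  set ν := μ1.prod μ2 with hν
  set φ : X × X → ℝ := fun p => ∑ i, lam i * (f p.2 i - r i) with hφ
  have hφc : Continuous φ := by
    refine continuous_finset_sum _ fun i _ => ?_
    exact continuous_const.mul (((continuous_apply i).comp (hf.comp continuous_snd)).sub
      continuous_const)
  set g : X × X → ℝ := fun p => ε⁻¹ * (φ p - c p.1 p.2) with hg
  have hgc : Continuous g := continuous_const.mul (hφc.sub hc)
  obtain ⟨K, hK0, hK⟩ := bdd_of_continuous hgc
  set H : X → ℝ := fun x => ∫ y, exp (g (x, y)) ∂μ2 with hH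
  have hHm : StronglyMeasurable H :=
    (hgc.rexp.stronglyMeasurable).integral_prod_right'
  have hint_expg : ∀ x : X, Integrable (fun y => exp (g (x, y))) μ2 := fun x =>
    integrable_of_forall_abs_le ((hgc.rexp.comp (Continuous.prodMk_right x)).aestronglyMeasurable)
      (K := exp K) fun y => by
        rw [abs_of_pos (exp_pos _)]
        exact exp_le_exp.2 ((le_abs_self _).trans (hK (x, y)))
  have hHpos : ∀ x, 0 < H x := fun x => integral_exp_pos (hint_expg x)
  have hHub : ∀ x, H x ≤ exp K := by
    intro x
    calc H x ≤ ∫ _, exp K ∂μ2 := by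
            refine integral_mono (hint_expg x) (integrable_const _) fun y => ?_
            exact exp_le_exp.2 ((le_abs_self _).trans (hK (x, y)))
      _ = exp K := by simp
  have hHlb : ∀ x, exp (-K) ≤ H x := by
    intro x
    calc (exp (-K) : ℝ) = ∫ _, exp (-K) ∂μ2 := by simp
      _ ≤ H x := by
            refine integral_mono (integrable_const _) (hint_expg x) fun y => ?_
            exact exp_le_exp.2 (neg_le_of_abs_le (hK (x, y)))
  have hlogH : ∀ x, |log (H x)| ≤ K := by
    intro x
    rw [abs_le]
    constructor
    · exact (Real.le_log_iff_exp_le (hHpos x)).2 (hHlb x)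
    · exact (Real.log_le_iff_le_exp (hHpos x)).2 (hHub x)
  set F : X × X → ℝ := fun p => g p - log (H p.1) with hF
  have hFm : StronglyMeasurable F :=
    hgc.stronglyMeasurable.sub ((Real.measurable_log.comp hHm.measurable).stronglyMeasurable.comp_measurable measurable_fst)
  have hFb : ∀ p, |F p| ≤ K + K := fun p =>
    (abs_sub _ _).trans (add_le_add (hK p) (hlogH p.1))
  have hexpF_int : Integrable (fun p => exp (F p)) ν :=
    integrable_of_forall_abs_le (Real.measurable_exp.comp hFm.measurable).aestronglyMeasurable (K := exp (K + K)) fun p => by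
      rw [abs_of_pos (exp_pos _)]
      exact exp_le_exp.2 ((le_abs_self _).trans (hFb p))
  have hFalt : ∀ x y, exp (F (x, y)) = exp (g (x, y)) / H x := fun x y => by
    rw [hF, exp_sub, exp_log (hHpos x)]
  have hinner : ∀ x, ∫ y, exp (F (x, y)) ∂μ2 = 1 := by
    intro x
    simp_rw [hFalt x]
    rw [integral_div]
    exact div_self (hHpos x).ne'
  have hexpF1 : ∫ p, exp (F p) ∂ν = 1 := by
    rw [hν, integral_prod _ hexpF_int]
    simp [hinner]
  set pm := ν.tilted F with hpmdef
  haveI hνne : NeZero ν := by infer_instance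
  haveI hpm : IsProbabilityMeasure pm := isProbabilityMeasure_tilted hexpF_int
  have hpmac : pm ≪ ν := tilted_absolutelyContinuous ν F
  have hνpm : ν ≪ pm := absolutelyContinuous_tilted hexpF_int
  have hpmfst : pm.map Prod.fst = μ1 := by
    ext s hs
    rw [Measure.map_apply measurable_fst hs]
    have hpre : Prod.fst ⁻¹' s = s ×ˢ (Set.univ : Set X) := by
      ext p; simp
    rw [hpre, hpmdef, tilted_apply' _ _ (hs.prod MeasurableSet.univ), hexpF1]
    simp only [div_one]
    rw [← Measure.prod_restrict s Set.univ, Measure.restrict_univ]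
    have hmeasF : Measurable fun p : X × X => ENNReal.ofReal (exp (F p)) :=
      ENNReal.measurable_ofReal.comp (Real.measurable_exp.comp hFm.measurable)
    rw [lintegral_prod _ hmeasF.aemeasurable]
    have hone : ∀ x : X, ∫⁻ y, ENNReal.ofReal (exp (F (x, y))) ∂μ2 = 1 := by
      intro x
      have hix : Integrable (fun y => exp (F (x, y))) μ2 := by
        have : (fun y => exp (F (x, y))) = fun y => exp (g (x, y)) / H x :=
          funext fun y => hFalt x y
        rw [this]
        exact (hint_expg x).div_const _
      rw [← ofReal_integral_eq_lintegral_ofReal hix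
        (Filter.Eventually.of_forall fun y => (exp_pos _).le), hinner x, ENNReal.ofReal_one]
    simp only [hone, lintegral_one, Measure.restrict_apply_univ]
  obtain ⟨Kc, _, hKc⟩ := bdd_of_continuous hc
  obtain ⟨Kφ, _, hKφ⟩ := bdd_of_continuous hφc
  have int_c : ∀ (γ : Measure (X × X)) [IsFiniteMeasure γ],
      Integrable (fun p : X × X => c p.1 p.2) γ := fun γ _ =>
    integrable_of_forall_abs_le hc.aestronglyMeasurable hKc
  have int_φ : ∀ (γ : Measure (X × X)) [IsFiniteMeasure γ], Integrable φ γ := fun γ _ =>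
    integrable_of_forall_abs_le hφc.aestronglyMeasurable hKφ
  have int_g : ∀ (γ : Measure (X × X)) [IsFiniteMeasure γ], Integrable g γ := fun γ _ =>
    integrable_of_forall_abs_le hgc.aestronglyMeasurable hK
  have int_logH : ∀ (γ : Measure (X × X)) [IsFiniteMeasure γ],
      Integrable (fun p : X × X => log (H p.1)) γ := fun γ _ =>
    integrable_of_forall_abs_le
      ((Real.measurable_log.comp (hHm.measurable.comp measurable_fst)).aestronglyMeasurable)
      (fun p => hlogH p.1)
  have int_F : ∀ (γ : Measure (X × X)) [IsFiniteMeasure γ], Integrable F γ := fun γ _ =>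
    integrable_of_forall_abs_le hFm.aestronglyMeasurable hFb
  have hmapint : ∀ (γ : Measure (X × X)) [IsProbabilityMeasure γ], γ.map Prod.fst = μ1 →
      ∫ p, log (H p.1) ∂γ = ∫ x, log (H x) ∂μ1 := by
    intro γ _ hm
    have hlogHm : AEStronglyMeasurable (fun x : X => log (H x)) (γ.map Prod.fst) :=
      (Real.measurable_log.comp hHm.measurable).aestronglyMeasurable
    rw [← hm]
    exact (integral_map measurable_fst.aemeasurable hlogHm).symm
  have key : ∀ (γ : Measure (X × X)) [IsProbabilityMeasure γ], γ.map Prod.fst = μ1 →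
      ε * ∫ p, F p ∂γ = ∫ p, φ p ∂γ - ∫ p, c p.1 p.2 ∂γ - ε * ∫ x, log (H x) ∂μ1 := by
    intro γ _ hm
    have h1 : ∫ p, F p ∂γ = ∫ p, g p ∂γ - ∫ p, log (H p.1) ∂γ :=
      integral_sub (int_g γ) (int_logH γ)
    have h2 : ∫ p, g p ∂γ = ε⁻¹ * ∫ p, (φ p - c p.1 p.2) ∂γ :=
      integral_const_mul ε⁻¹ _
    rw [h1, h2, integral_sub (int_φ γ) (int_c γ), hmapint γ hm]
    field_simp
  have hcont_i : ∀ i : Fin M, Continuous fun p : X × X => lam i * (f p.2 i - r i) :=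
    fun i => continuous_const.mul
      (((continuous_apply i).comp (hf.comp continuous_snd)).sub continuous_const)
  have hsum : ∀ (γ : Measure (X × X)) [IsProbabilityMeasure γ] (δ : Fin M → ℝ),
      ∑ i, lam i * (δ i - ∫ y, (f y i - r i) ∂(γ.map Prod.snd)) =
        (∑ i, lam i * δ i) - ∫ p, φ p ∂γ := by
    intro γ _ δ
    have h1 : ∀ i : Fin M, lam i * ∫ y, (f y i - r i) ∂(γ.map Prod.snd) =
        ∫ p, lam i * (f p.2 i - r i) ∂γ := by
      intro i
      have hmi : AEStronglyMeasurable (fun y : X => f y i - r i) (γ.map Prod.snd) :=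
        (((continuous_apply i).comp hf).sub continuous_const).aestronglyMeasurable
      rw [integral_map measurable_snd.aemeasurable hmi, ← integral_const_mul]
    have hint2 : ∀ i : Fin M, i ∈ Finset.univ →
        Integrable (fun p : X × X => lam i * (f p.2 i - r i)) γ := by
      intro i _
      obtain ⟨Ki, _, hKi⟩ := bdd_of_continuous (hcont_i i)
      exact integrable_of_forall_abs_le (hcont_i i).aestronglyMeasurable hKi
    simp_rw [mul_sub, Finset.sum_sub_distrib, h1]
    rw [← integral_finset_sum _ hint2]
  have hllr_ge : ∀ (γ : Measure (X × X)) [IsProbabilityMeasure γ], γ ≪ ν →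
      Integrable (llr γ ν) γ → ∫ p, F p ∂γ ≤ ∫ p, llr γ ν p ∂γ := by
    intro γ _ hac hintl
    have hπint : Integrable (llr γ pm) γ :=
      integrable_llr_tilted_right hac (int_F γ) hintl hexpF_int
    have h0 : 0 ≤ ∫ p, llr γ pm p ∂γ := my_integral_llr_nonneg (hac.trans hνpm) hπint
    have heq := integral_llr_tilted_right hac (int_F γ) hexpF_int hintl
    rw [hexpF1, Real.log_one, add_zero] at heq
    have : ∫ p, llr γ pm p ∂γ = ∫ p, llr γ ν p ∂γ - ∫ p, F p ∂γ := heq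
    linarith
  have hpm_llr : llr pm ν =ᵐ[pm] F := by
    have h0 : llr ν ν =ᵐ[ν] fun _ => (0 : ℝ) := by
      filter_upwards [Measure.rnDeriv_self ν] with p hp
      rw [llr, hp, ENNReal.toReal_one, Real.log_one]
    have h1 : llr pm ν =ᵐ[ν] F := by
      filter_upwards [llr_tilted_left Measure.AbsolutelyContinuous.rfl hexpF_int
        hFm.measurable.aemeasurable, h0] with p hp hp0
      rw [hp, hp0, hexpF1, Real.log_one]
      ring
    exact hpmac.ae_le h1
  have hpmKL_int : Integrable (llr pm ν) pm := (integrable_congr hpm_llr).2 (int_F pm)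
  have hpmKL : ∫ p, llr pm ν p ∂pm = ∫ p, F p ∂pm := integral_congr_ae hpm_llr
  have hpmF0 : 0 ≤ ∫ p, F p ∂pm := by
    rw [← hpmKL]; exact my_integral_llr_nonneg hpmac hpmKL_int

  haveI hc' := hc  -- keep
  have hBint : ∫ x, Bfun c f r lam μ2 ε x ∂μ1 = ε * ∫ x, log (H x) ∂μ1 :=
    integral_const_mul ε _
  rw [hBint]
  set J : ℝ := ∫ x, log (H x) ∂μ1 with hJ
  set tR : ℝ := -(ε * J) - Rstar (-lam) with htR
  have hdot : ∀ δ : Fin M → ℝ, δ ⬝ᵥ (-lam) = -∑ i, lam i * δ i := by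
    intro δ
    rw [dotProduct, ← Finset.sum_neg_distrib]
    exact Finset.sum_congr rfl fun i _ => by simp; ring
  have hRb : ∀ δ : Fin M → ℝ, -Rstar (-lam) ≤ R δ + ∑ i, lam i * δ i := by
    intro δ
    have := (hRstar (-lam)).1 (Set.mem_range_self δ)
    rw [hdot δ] at this
    linarith
  refine le_antisymm ?_ ?_
  · -- sInf ≤ tR
    refine le_of_not_gt fun hlt => ?_
    obtain ⟨z, hz1, hz2⟩ := EReal.exists_between_coe_real hlt
    have hz1' : tR < z := by exact_mod_cast hz1
    obtain ⟨w, hwmem, hw, -⟩ := (hRstar (-lam)).exists_between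
      (show Rstar (-lam) - (z - tR) < Rstar (-lam) by linarith)
    obtain ⟨δ, rfl⟩ := hwmem
    simp only at hw
    rw [hdot δ] at hw
    -- the element of the set given by (pm, δ)
    have hKLpm : (KL pm ν : EReal) = ((∫ p, F p ∂pm : ℝ) : EReal) := by
      rw [KL, if_pos ⟨hpmac, hpmKL_int⟩, hpmKL, EReal.coe_ennreal_ofReal,
        max_eq_left hpmF0]
    have hval : (((∫ p, c p.1 p.2 ∂pm : ℝ) : EReal)
          + (ε : EReal) * ((KL pm ν : ℝ≥0∞) : EReal)
          + ((R δ + ∑ i, lam i * (δ i - ∫ y, (f y i - r i) ∂(pm.map Prod.snd)) : ℝ) : EReal))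
        = ((-(ε * J) + (R δ + ∑ i, lam i * δ i) : ℝ) : EReal) := by
      rw [hKLpm, ← EReal.coe_mul, ← EReal.coe_add, ← EReal.coe_add, EReal.coe_eq_coe_iff]
      have hk := key pm hpmfst
      have hs := hsum pm δ
      rw [hs]
      linarith
    have hmem : ((-(ε * J) + (R δ + ∑ i, lam i * δ i) : ℝ) : EReal) ∈
        {v : EReal | ∃ (γ : Measure (X × X)) (δ : Fin M → ℝ),
          IsProbabilityMeasure γ ∧ γ.map Prod.fst = μ1 ∧
          v = ((∫ p, c p.1 p.2 ∂γ : ℝ) : EReal)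
                + (ε : EReal) * ((KL γ ν : ℝ≥0∞) : EReal)
                + ((R δ + ∑ i, lam i * (δ i - ∫ y, (f y i - r i) ∂(γ.map Prod.snd)) : ℝ) : EReal)} :=
      ⟨pm, δ, hpm, hpmfst, hval.symm⟩
    have h1 : sInf _ ≤ ((-(ε * J) + (R δ + ∑ i, lam i * δ i) : ℝ) : EReal) := sInf_le hmem
    have h2 : ((-(ε * J) + (R δ + ∑ i, lam i * δ i) : ℝ) : EReal) < (z : EReal) := by
      rw [EReal.coe_lt_coe_iff]
      linarith
    exact absurd ((h1.trans_lt h2).trans hz2) (lt_irrefl _)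
  · -- tR ≤ sInf
    refine le_sInf ?_
    rintro v ⟨γ, δ, hγp, hγfst, rfl⟩
    haveI := hγp
    by_cases hKL : γ ≪ ν ∧ Integrable (llr γ ν) γ
    · rw [KL, if_pos hKL]
      set I : ℝ := ∫ p, llr γ ν p ∂γ with hI
      have hI0 : 0 ≤ I := my_integral_llr_nonneg hKL.1 hKL.2
      have hge : ∫ p, F p ∂γ ≤ I := hllr_ge γ hKL.1 hKL.2
      rw [EReal.coe_ennreal_ofReal, max_eq_left hI0, ← EReal.coe_mul, ← EReal.coe_add,
        ← EReal.coe_add]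
      rw [EReal.coe_le_coe_iff]
      have hk := key γ hγfst
      have hs := hsum γ δ
      rw [hs]
      have hmul : ε * ∫ p, F p ∂γ ≤ ε * I := mul_le_mul_of_nonneg_left hge hε.le
      have hRδ := hRb δ
      linarith
    · rw [KL, if_neg hKL, EReal.coe_ennreal_top, EReal.coe_mul_top_of_pos hε,
        EReal.add_top_of_ne_bot (EReal.coe_ne_bot _), EReal.top_add_of_ne_bot (EReal.coe_ne_bot _)]
      exact le_top
end

section
/- Let ε > 0 and let Σ_Y be a real symmetric positive definite n×n matrix with spectral decomposition Σ_Y = U⁻¹ D U, where U is orthogonal and D is diagonal. Then the matrix Riccati equation Σ + ε⁻² Σ² = Σ_Y has a unique symmetric positive definite solution, given by Σ = U⁻¹ Z U where Z is the diagonal matrix with entries Z_{ii} = ½ ( −ε² + √( ε⁴ + 4 ε² D_{ii} ) ). -/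
open Matrix Real

lemma scalar_key (ε d : ℝ) (hε : 0 < ε) (hd : 0 < d) :
    0 < (1/2) * (-ε^2 + Real.sqrt (ε^4 + 4*ε^2*d)) ∧
    (1/2) * (-ε^2 + Real.sqrt (ε^4 + 4*ε^2*d)) +
      (ε^2)⁻¹ * ((1/2) * (-ε^2 + Real.sqrt (ε^4 + 4*ε^2*d)))^2 = d := by
  have hnn : (0:ℝ) ≤ ε^4 + 4*ε^2*d := by positivity
  have hε2 : (0:ℝ) < ε^2 := by positivity
  have hs2 : Real.sqrt (ε^4 + 4*ε^2*d) ^ 2 = ε^4 + 4*ε^2*d := Real.sq_sqrt hnn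
  have hgt : ε^2 < Real.sqrt (ε^4 + 4*ε^2*d) := by
    rw [show ε^4 + 4*ε^2*d = (ε^2)^2 + 4*ε^2*d by ring]
    refine (Real.lt_sqrt (by positivity)).mpr ?_
    nlinarith [mul_pos hε2 hd]
  constructor
  · linarith
  · field_simp
    nlinarith [hs2, Real.sq_sqrt (show (0:ℝ) ≤ ε^2*(ε^2+4*d) by positivity)]

lemma posdef_conj {n : ℕ} {M U : Matrix (Fin n) (Fin n) ℝ}
    (hM : M.PosDef) (hU : Uᵀ * U = 1) : (Uᵀ * M * U).PosDef := by
  have h : Mᵀ = M := by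
    have := hM.1
    rwa [Matrix.IsHermitian, conjTranspose_eq_transpose_of_trivial] at this
  rw [posDef_iff_dotProduct_mulVec]
  constructor
  · rw [Matrix.IsHermitian, conjTranspose_eq_transpose_of_trivial, transpose_mul,
      transpose_mul, transpose_transpose, h, Matrix.mul_assoc]
  · intro x hx
    have hUx : U *ᵥ x ≠ 0 := by
      intro h0
      apply hx
      have : Uᵀ *ᵥ (U *ᵥ x) = x := by
        rw [Matrix.mulVec_mulVec, hU, Matrix.one_mulVec]
      rw [h0, Matrix.mulVec_zero] at this
      exact this.symm
    have hpos := hM.dotProduct_mulVec_pos hUx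
    convert hpos using 1
    simp only [star_trivial]
    rw [Matrix.mul_assoc, ← Matrix.mulVec_mulVec, Matrix.mulVec_transpose,
      dotProduct_comm, ← Matrix.dotProduct_mulVec, dotProduct_comm,
      ← Matrix.mulVec_mulVec]

lemma trace_nonneg' {n : ℕ} {M : Matrix (Fin n) (Fin n) ℝ} (h : M.PosSemidef) :
    0 ≤ M.trace := by
  rw [Matrix.trace]
  refine Finset.sum_nonneg fun i _ => ?_
  have := h.dotProduct_mulVec_nonneg (Pi.single i 1)
  simpa [Matrix.diag, Matrix.mulVec_single, dotProduct, Pi.single_apply] using this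

lemma eq_zero_of_trace_transpose_mul_self {n : ℕ} {X : Matrix (Fin n) (Fin n) ℝ}
    (h : (Xᵀ * X).trace = 0) : X = 0 := by
  rw [Matrix.trace] at h
  have key : ∀ j ∈ Finset.univ, (Xᵀ * X).diag j = 0 := by
    refine (Finset.sum_eq_zero_iff_of_nonneg fun j _ => ?_).mp h
    simp only [Matrix.diag, Matrix.mul_apply, Matrix.transpose_apply]
    exact Finset.sum_nonneg fun i _ => mul_self_nonneg _
  ext i j
  have hj := key j (Finset.mem_univ j)
  simp only [Matrix.diag, Matrix.mul_apply, Matrix.transpose_apply] at hj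
  have := (Finset.sum_eq_zero_iff_of_nonneg fun i _ => mul_self_nonneg (X i j)).mp hj
    i (Finset.mem_univ i)
  simpa using mul_self_eq_zero.mp this

/-- (Proposition `t:GaussSolution` (iii).) For `ε > 0` and a symmetric
positive definite `Σ_Y = U⁻¹ D U` (`U` orthogonal, `D` diagonal), the Riccati equation
`Σ + ε⁻² Σ² = Σ_Y` has a unique symmetric positive definite solution, namely
`Σ = U⁻¹ Z U` where `Z` is diagonal with `Z_ii = ½(−ε² + √(ε⁴ + 4 ε² D_ii))`. -/
theorem stmt_13 {n : ℕ} (ε : ℝ) (hε : 0 < ε)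
    (SigY U D : Matrix (Fin n) (Fin n) ℝ)
    (hU : U.transpose * U = 1) (hD : D.IsDiag)
    (hdecomp : SigY = U⁻¹ * D * U) (hSigY : SigY.PosDef) :
    ∀ S : Matrix (Fin n) (Fin n) ℝ,
      (S.PosDef ∧ S + (ε ^ 2)⁻¹ • (S * S) = SigY)
        ↔ S = U⁻¹ * (Matrix.diagonal fun i =>
            (1 / 2) * (-ε ^ 2 + Real.sqrt (ε ^ 4 + 4 * ε ^ 2 * D i i))) * U := by
  intro S
  have hε2 : (0:ℝ) < ε^2 := by positivity
  have hUinv : U⁻¹ = Uᵀ := Matrix.inv_eq_left_inv hU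
  have hUU : U * Uᵀ = 1 := mul_eq_one_comm.mp hU
  rw [hUinv] at hdecomp ⊢
  -- D is PosDef
  have hDform : U * SigY * Uᵀ = D := by
    rw [hdecomp]
    rw [show U * (Uᵀ * D * U) * Uᵀ = (U * Uᵀ) * D * (U * Uᵀ) by
      simp only [Matrix.mul_assoc], hUU, Matrix.one_mul, Matrix.mul_one]
  have hDpos : D.PosDef := by
    have hU2 : (Uᵀ)ᵀ * Uᵀ = 1 := by rw [transpose_transpose, hUU]
    have := posdef_conj hSigY hU2
    rwa [transpose_transpose, hDform] at this
  have hd : ∀ i, 0 < D i i := by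
    have hdd : D = Matrix.diagonal D.diag := hD.diagonal_diag.symm
    rw [hdd] at hDpos
    exact Matrix.posDef_diagonal_iff.mp hDpos
  set z : Fin n → ℝ := fun i =>
    (1 / 2) * (-ε ^ 2 + Real.sqrt (ε ^ 4 + 4 * ε ^ 2 * D i i)) with hzdef
  have hz : ∀ i, 0 < z i := fun i => (scalar_key ε (D i i) hε (hd i)).1
  have hzeq : ∀ i, z i + (ε^2)⁻¹ * (z i)^2 = D i i :=
    fun i => (scalar_key ε (D i i) hε (hd i)).2
  set T : Matrix (Fin n) (Fin n) ℝ := Uᵀ * Matrix.diagonal z * U with hTdef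
  have hZpos : (Matrix.diagonal z).PosDef := Matrix.PosDef.diagonal hz
  have hTpos : T.PosDef := posdef_conj hZpos hU
  have hZeq : Matrix.diagonal z + (ε ^ 2)⁻¹ • (Matrix.diagonal z * Matrix.diagonal z) = D := by
    rw [Matrix.diagonal_mul_diagonal, ← Matrix.diagonal_smul, Matrix.diagonal_add]
    rw [show D = Matrix.diagonal D.diag from hD.diagonal_diag.symm]
    refine congrArg Matrix.diagonal (funext fun i => ?_)
    have := hzeq i
    simpa [pow_two, Matrix.diag] using this
  have hTeq : T + (ε ^ 2)⁻¹ • (T * T) = SigY := by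
    have hTT : T * T = Uᵀ * (Matrix.diagonal z * Matrix.diagonal z) * U := by
      rw [hTdef, show Uᵀ * Matrix.diagonal z * U * (Uᵀ * Matrix.diagonal z * U)
          = Uᵀ * Matrix.diagonal z * (U * Uᵀ) * (Matrix.diagonal z * U) by
        simp only [Matrix.mul_assoc], hUU, Matrix.mul_one]
      simp only [Matrix.mul_assoc]
    rw [hTT, hdecomp, ← hZeq, hTdef]
    simp only [Matrix.mul_add, Matrix.add_mul, mul_smul_comm, smul_mul_assoc]
  constructor
  · rintro ⟨hSpos, hSeq⟩
    -- uniqueness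
    have hSsym : Sᵀ = S := by
      have := hSpos.1
      rwa [Matrix.IsHermitian, conjTranspose_eq_transpose_of_trivial] at this
    have hTsym : Tᵀ = T := by
      have := hTpos.1
      rwa [Matrix.IsHermitian, conjTranspose_eq_transpose_of_trivial] at this
    set X : Matrix (Fin n) (Fin n) ℝ := S - T with hXdef
    have hXsym : Xᵀ = X := by rw [hXdef, transpose_sub, hSsym, hTsym]
    have h1 : S + (ε ^ 2)⁻¹ • (S * S) = T + (ε ^ 2)⁻¹ • (T * T) := by rw [hSeq, hTeq]
    have h3 : (ε^2) • S + S * S = (ε^2) • T + T * T := by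
      have := congrArg (fun M => (ε^2 : ℝ) • M) h1
      simpa [smul_add, smul_smul, mul_inv_cancel₀ (ne_of_gt hε2), one_smul] using this
    have hkey : (ε^2 : ℝ) • X + S * X + X * T = 0 := by
      have : (ε^2 : ℝ) • X + S * X + X * T
          = ((ε^2) • S + S * S) - ((ε^2) • T + T * T) := by
        rw [hXdef, smul_sub, Matrix.mul_sub, Matrix.sub_mul]
        abel
      rw [this, h3, sub_self]
    have h0 : Xᵀ * ((ε^2 : ℝ) • X + S * X + X * T) = 0 := by rw [hkey, Matrix.mul_zero]
    have htr : (ε^2) * (Xᵀ * X).trace + (Xᵀ * (S * X)).trace + (Xᵀ * (X * T)).trace = 0 := by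
      have := congrArg Matrix.trace h0
      simpa [Matrix.mul_add, Matrix.mul_smul, Matrix.trace_add, Matrix.trace_smul,
        smul_eq_mul, Matrix.mul_assoc] using this
    have hXH : Xᴴ = Xᵀ := conjTranspose_eq_transpose_of_trivial X
    have ha : 0 ≤ (Xᵀ * X).trace := by
      have := Matrix.posSemidef_conjTranspose_mul_self X
      rw [hXH] at this
      exact trace_nonneg' this
    have hb : 0 ≤ (Xᵀ * (S * X)).trace := by
      have := hSpos.posSemidef.conjTranspose_mul_mul_same X
      rw [hXH] at this
      rw [← Matrix.mul_assoc]
      exact trace_nonneg' this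
    have hc : 0 ≤ (Xᵀ * (X * T)).trace := by
      have h2 : (Xᵀ * (X * T)).trace = (X * T * Xᵀ).trace := by
        rw [Matrix.trace_mul_comm, Matrix.mul_assoc]
      have := hTpos.posSemidef.mul_mul_conjTranspose_same X
      rw [hXH] at this
      rw [h2]
      exact trace_nonneg' this
    have ha0 : (Xᵀ * X).trace = 0 := by nlinarith
    have hX0 : X = 0 := eq_zero_of_trace_transpose_mul_self ha0
    have := sub_eq_zero.mp hX0
    rw [hTdef] at this
    exact this
  · intro h
    rw [h]
    exact ⟨hTpos, hTeq⟩
end
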